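/- arXiv:2108.00504 — 6 statements merged into one kernel-verified Lean document; each statement's English description precedes it below -/
import Mathlib

section
/- Let $A$ be a commutative ring and $f = u^n + a_1 u^{n-1} + \cdots + a_n$ a monic polynomial over $A$. Define the splitting ring $B = \mathrm{Split}_A(f) = A[\xi_1,\ldots,\xi_n]/I$, where $I$ is generated by the elements $a_i - (-1)^i e_i(\xi_1,\ldots,\xi_n)$ for $1 \le i \le n$ (with $e_i$ the $i$-th elementary symmetric polynomial). Then $B$ is a free $A$-module of rank $n!$. -/
/-- The ideal of relations defining the splitting ring of a monic polynomial
`f = u^n + a_1 u^(n-1) + ... + a_n`: it is generated by the elements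
`a_i - (-1)^i e_i(ξ_1, ..., ξ_n)` for `1 ≤ i ≤ n`, where `a_i = f.coeff (n - i)`. -/
noncomputable def splittingIdeal (A : Type) [CommRing A] (n : ℕ) (f : Polynomial A) :
    Ideal (MvPolynomial (Fin n) A) :=
  Ideal.span (Set.range fun i : Fin n =>
    MvPolynomial.C (f.coeff (n - ((i : ℕ) + 1))) -
      (-1 : MvPolynomial (Fin n) A) ^ ((i : ℕ) + 1) *
        MvPolynomial.esymm (Fin n) A ((i : ℕ) + 1))

/-- The splitting ring `Split_A(f) = A[ξ_1, ..., ξ_n]/I`. -/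
noncomputable abbrev SplitRing (A : Type) [CommRing A] (n : ℕ) (f : Polynomial A) : Type :=
  MvPolynomial (Fin n) A ⧸ splittingIdeal A n f

/-!
Adjoin one root: over `A' = A[u]/(f)`, which is free over `A` with basis `1, x, …, xⁿ⁻¹`
(`x` the class of `u`), `f = (u - x) g` with `g` monic of degree `n - 1`. Sending
`ξₙ ↦ x` identifies `Split_A(f)` with `Split_{A'}(g)`, since both classify a root `x` of `f`
together with a factorisation of `f / (u - x)` into linear factors. By induction
`Split_{A'}(g)` is free of rank `(n - 1)!` over `A'`, hence `Split_A(f)` is free of rank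
`n · (n - 1)! = n!` over `A`.
-/

open Polynomial

theorem Polynomial.natDegree_prod_X_sub_C_le {R ι : Type*} [CommRing R] [Fintype ι]
    (r : ι → R) :
    (∏ j, (X - C (r j))).natDegree ≤ Fintype.card ι :=
  (natDegree_prod_le _ _).trans <|
    (Finset.sum_le_card_nsmul _ _ 1 fun j _ => natDegree_X_sub_C_le (r j)).trans (by simp)

theorem Polynomial.map_eq_prod_X_sub_C_iff {A S : Type*} [CommRing A] [CommRing S] {n : ℕ}
    {f : A[X]} (hd : f.natDegree ≤ n) (φ : A →+* S) (r : Fin n → S) :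
    f.map φ = ∏ j, (X - C (r j)) ↔
      ∀ k ≤ n, φ (f.coeff k) = (-1) ^ (n - k) * (Finset.univ.val.map r).esymm (n - k) := by
  have hprod : ∏ j, (X - C (r j)) = ((Finset.univ.val.map r).map fun s => X - C s).prod := by
    rw [Multiset.map_map]; rfl
  rw [ext_iff_degree_le ((degree_map_le).trans (degree_le_of_natDegree_le hd))
    (degree_le_of_natDegree_le (by simpa using natDegree_prod_X_sub_C_le r))]
  refine forall₂_congr fun k hk => ?_
  rw [coeff_map, hprod, Multiset.prod_X_sub_C_coeff _ (by simpa using hk)]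
  simp only [Multiset.card_map, Finset.card_val, Finset.card_univ, Fintype.card_fin]

theorem MvPolynomial.eval₂Hom_esymm_eq_multiset_esymm {R S σ : Type*} [CommRing R]
    [CommRing S] [Fintype σ] (φ : R →+* S) (r : σ → S) (k : ℕ) :
    eval₂Hom φ r (esymm σ R k) = (Finset.univ.val.map r).esymm k := by
  rw [coe_eval₂Hom, eval₂_eq_eval_map, map_esymm, ← coe_aeval_eq_eval]
  exact aeval_esymm_eq_multiset_esymm _ _ _ _

namespace AdjoinRoot

variable {A : Type} [CommRing A] {f : A[X]}

theorem nontrivial_of_monic [Nontrivial A] (hf : f.Monic) (hd : 0 < f.natDegree) :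
    Nontrivial (AdjoinRoot f) :=
  nontrivial_of_ne ((powerBasis' hf).basis ⟨0, by simpa⟩) 0 (Module.Basis.ne_zero _ _)

variable (f) in
noncomputable def deflate : (AdjoinRoot f)[X] :=
  f.map (of f) /ₘ (X - C (root f))

variable (f) in
theorem X_sub_C_root_mul_deflate : (X - C (root f)) * deflate f = f.map (of f) :=
  mul_divByMonic_eq_iff_isRoot.2 (isRoot_root f)

theorem monic_deflate (hf : f.Monic) : (deflate f).Monic :=
  (monic_X_sub_C _).of_mul_monic_left (X_sub_C_root_mul_deflate f ▸ hf.map _)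

theorem natDegree_deflate [Nontrivial A] {n : ℕ} (hf : f.Monic) (hd : f.natDegree = n + 1) :
    (deflate f).natDegree = n := by
  have := nontrivial_of_monic hf (by omega)
  rw [deflate, natDegree_divByMonic _ (monic_X_sub_C _), hf.natDegree_map, natDegree_X_sub_C, hd,
    Nat.add_sub_cancel]

end AdjoinRoot

namespace SplitRing

open AdjoinRoot

variable {A S : Type} [CommRing A] [CommRing S] {n : ℕ} {f : A[X]}

theorem splittingIdeal_le_ker_iff (hf : f.Monic) (hd : f.natDegree = n) (φ : A →+* S)
    (r : Fin n → S) :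
    splittingIdeal A n f ≤ RingHom.ker (MvPolynomial.eval₂Hom φ r) ↔
      f.map φ = ∏ j, (X - C (r j)) := by
  rw [map_eq_prod_X_sub_C_iff hd.le, splittingIdeal, Ideal.span_le, Set.range_subset_iff]
  simp only [SetLike.mem_coe, RingHom.mem_ker, map_sub, map_mul, map_pow, map_neg, map_one,
    MvPolynomial.eval₂Hom_C, MvPolynomial.eval₂Hom_esymm_eq_multiset_esymm, sub_eq_zero]
  constructor
  · intro h k hk
    rcases hk.lt_or_eq with hk | rfl
    · have := h ⟨n - k - 1, by omega⟩
      rwa [Fin.val_mk, show n - (n - k - 1 + 1) = k by omega, show n - k - 1 + 1 = n - k by omega]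
        at this
    · -- the leading coefficients agree by monicity
      simp [Multiset.esymm, ← hd, hf.coeff_natDegree]
  · intro h i
    have := h (n - (i + 1)) (by omega)
    rwa [show n - (n - (i + 1)) = i + 1 by omega] at this

noncomputable def root (j : Fin n) : SplitRing A n f :=
  Ideal.Quotient.mk _ (MvPolynomial.X j)

theorem mk_eq_eval₂Hom :
    Ideal.Quotient.mk (splittingIdeal A n f) =
      MvPolynomial.eval₂Hom (algebraMap A (SplitRing A n f)) root :=
  MvPolynomial.ringHom_ext (fun _ => by simp [← Ideal.Quotient.mk_algebraMap])
    fun _ => by simp [root]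

theorem map_algebraMap_eq_prod (hf : f.Monic) (hd : f.natDegree = n) :
    f.map (algebraMap A (SplitRing A n f)) = ∏ j, (X - C (root j)) :=
  (splittingIdeal_le_ker_iff hf hd _ _).1 (by rw [← mk_eq_eval₂Hom, Ideal.mk_ker])

theorem eval₂_root (hf : f.Monic) (hd : f.natDegree = n) (j : Fin n) :
    f.eval₂ (algebraMap A (SplitRing A n f)) (root j) = 0 := by
  rw [eval₂_eq_eval_map, map_algebraMap_eq_prod hf hd, eval_prod]
  exact Finset.prod_eq_zero (Finset.mem_univ j) (by simp)

noncomputable def lift (hf : f.Monic) (hd : f.natDegree = n) (φ : A →+* S) (r : Fin n → S)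
    (h : f.map φ = ∏ j, (X - C (r j))) : SplitRing A n f →+* S :=
  Ideal.Quotient.lift _ (MvPolynomial.eval₂Hom φ r) fun _ hp =>
    (splittingIdeal_le_ker_iff hf hd φ r).2 h hp

section lift

variable (hf : f.Monic) (hd : f.natDegree = n) (φ : A →+* S) (r : Fin n → S)
  (h : f.map φ = ∏ j, (X - C (r j)))

@[simp]
theorem lift_algebraMap (a : A) : lift hf hd φ r h (algebraMap A _ a) = φ a :=
  MvPolynomial.eval₂Hom_C _ _ _

@[simp]
theorem lift_root (j : Fin n) : lift hf hd φ r h (root j) = r j :=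
  MvPolynomial.eval₂Hom_X' _ _ _

end lift

theorem ringHom_ext {ψ₁ ψ₂ : SplitRing A n f →+* S}
    (halg : ψ₁.comp (algebraMap A _) = ψ₂.comp (algebraMap A _))
    (hroot : ∀ j, ψ₁ (root j) = ψ₂ (root j)) : ψ₁ = ψ₂ :=
  Ideal.Quotient.ringHom_ext <| MvPolynomial.ringHom_ext (RingHom.congr_fun halg) hroot


theorem map_algebraMap_deflate_eq_prod [Nontrivial A] (hf : f.Monic) (hd : f.natDegree = n + 1) :
    f.map (algebraMap A (SplitRing (AdjoinRoot f) n (deflate f))) =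
      ∏ j, (X - C (Fin.snoc root (algebraMap (AdjoinRoot f) _ (AdjoinRoot.root f)) j)) := by
  rw [IsScalarTower.algebraMap_eq A (AdjoinRoot f), ← Polynomial.map_map,
    AdjoinRoot.algebraMap_eq, ← X_sub_C_root_mul_deflate, Polynomial.map_mul,
    map_algebraMap_eq_prod (monic_deflate hf) (natDegree_deflate hf hd), Fin.prod_univ_castSucc]
  simp only [Polynomial.map_sub, map_X, map_C, Fin.snoc_castSucc, Fin.snoc_last]
  ring

noncomputable def toSplitRingDeflate [Nontrivial A] (hf : f.Monic) (hd : f.natDegree = n + 1) :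
    SplitRing A (n + 1) f →+* SplitRing (AdjoinRoot f) n (deflate f) :=
  lift hf hd (algebraMap A _) (Fin.snoc root (algebraMap (AdjoinRoot f) _ (AdjoinRoot.root f)))
    (map_algebraMap_deflate_eq_prod hf hd)

noncomputable def ofAdjoinRoot (hf : f.Monic) (hd : f.natDegree = n + 1) :
    AdjoinRoot f →+* SplitRing A (n + 1) f :=
  AdjoinRoot.lift (algebraMap A _) (root (Fin.last n)) (eval₂_root hf hd _)

theorem map_ofAdjoinRoot_deflate (hf : f.Monic) (hd : f.natDegree = n + 1) :
    (deflate f).map (ofAdjoinRoot hf hd) = ∏ i : Fin n, (X - C (root i.castSucc)) := by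
  apply (monic_X_sub_C (root (Fin.last n) : SplitRing A (n + 1) f)).isRegular.left
  calc (X - C (root (Fin.last n))) * (deflate f).map (ofAdjoinRoot hf hd)
      = ((X - C (AdjoinRoot.root f)) * deflate f).map (ofAdjoinRoot hf hd) := by
        simp [ofAdjoinRoot]
    _ = f.map (algebraMap A _) := by
        rw [X_sub_C_root_mul_deflate, Polynomial.map_map]
        congr 1
        ext a
        simp [ofAdjoinRoot]
    _ = (X - C (root (Fin.last n))) * ∏ i : Fin n, (X - C (root i.castSucc)) := by
        rw [map_algebraMap_eq_prod hf hd, Fin.prod_univ_castSucc]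
        ring

noncomputable def ofSplitRingDeflate [Nontrivial A] (hf : f.Monic) (hd : f.natDegree = n + 1) :
    SplitRing (AdjoinRoot f) n (deflate f) →+* SplitRing A (n + 1) f :=
  lift (monic_deflate hf) (natDegree_deflate hf hd) (ofAdjoinRoot hf hd)
    (fun i => root i.castSucc) (map_ofAdjoinRoot_deflate hf hd)

theorem ofSplitRingDeflate_comp_toSplitRingDeflate [Nontrivial A] (hf : f.Monic)
    (hd : f.natDegree = n + 1) :
    (ofSplitRingDeflate hf hd).comp (toSplitRingDeflate hf hd) = RingHom.id _ := by
  refine ringHom_ext (RingHom.ext fun a => ?_) fun j => ?_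
  · simp [toSplitRingDeflate, ofSplitRingDeflate, IsScalarTower.algebraMap_apply A (AdjoinRoot f),
      ofAdjoinRoot]
  · induction j using Fin.lastCases <;>
      simp [toSplitRingDeflate, ofSplitRingDeflate, ofAdjoinRoot]

theorem toSplitRingDeflate_comp_ofSplitRingDeflate [Nontrivial A] (hf : f.Monic)
    (hd : f.natDegree = n + 1) :
    (toSplitRingDeflate hf hd).comp (ofSplitRingDeflate hf hd) = RingHom.id _ := by
  refine ringHom_ext (AdjoinRoot.ringHom_ext (RingHom.ext fun a => ?_) ?_) fun j => ?_ <;>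
    simp [toSplitRingDeflate, ofSplitRingDeflate, IsScalarTower.algebraMap_apply A (AdjoinRoot f),
      ofAdjoinRoot]

noncomputable def equivDeflate [Nontrivial A] (hf : f.Monic) (hd : f.natDegree = n + 1) :
    SplitRing A (n + 1) f ≃ₐ[A] SplitRing (AdjoinRoot f) n (deflate f) :=
  AlgEquiv.ofRingEquiv (f := RingEquiv.ofRingHom _ _
    (toSplitRingDeflate_comp_ofSplitRingDeflate hf hd)
    (ofSplitRingDeflate_comp_toSplitRingDeflate hf hd))
    fun a => lift_algebraMap hf hd _ _ (map_algebraMap_deflate_eq_prod hf hd) a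

theorem splittingIdeal_zero : splittingIdeal A 0 f = ⊥ := by
  rw [splittingIdeal, Set.range_eq_empty, Ideal.span_empty]

noncomputable def equivOfZero : SplitRing A 0 f ≃ₐ[A] A :=
  (Ideal.quotientEquivAlgOfEq A splittingIdeal_zero).trans <|
    (AlgEquiv.quotientBot A _).trans (MvPolynomial.isEmptyAlgEquiv A (Fin 0))

end SplitRing

/-- The splitting ring of a monic polynomial of degree `n` is a free `A`-module of
rank `n!`. -/
theorem stmt0 (A : Type) [CommRing A] (n : ℕ) (f : Polynomial A)
    (hmonic : f.Monic) (hdeg : f.natDegree = n) :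
    Nonempty (Module.Basis (Fin (Nat.factorial n)) A (SplitRing A n f)) := by
  induction n generalizing A f with
  | zero =>
    exact ⟨(Module.Basis.singleton (Fin 1) A).map SplitRing.equivOfZero.symm.toLinearEquiv⟩
  | succ n ih =>
    cases subsingleton_or_nontrivial A
    · have := Module.subsingleton A (SplitRing A (n + 1) f)
      exact ⟨.ofRepr (LinearEquiv.ofSubsingleton _ _)⟩
    obtain ⟨b⟩ := ih (AdjoinRoot f) (AdjoinRoot.deflate f) (AdjoinRoot.monic_deflate hmonic)
      (AdjoinRoot.natDegree_deflate hmonic hdeg)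
    let bAdj : Module.Basis (Fin (n + 1)) A (AdjoinRoot f) :=
      (AdjoinRoot.powerBasis' hmonic).basis.reindex (finCongr (by simp [hdeg]))
    exact ⟨((bAdj.smulTower b).reindex
      (finProdFinEquiv.trans (finCongr (Nat.factorial_succ n).symm))).map
        (SplitRing.equivDeflate hmonic hdeg).symm.toLinearEquiv⟩
end

section
/- Let $A$ be a commutative ring, $f \in A[u]$ monic of degree $n$, and $B = \mathrm{Split}_A(f)$, $C = \mathrm{Fact}^{p,q}_A(f)$ with $p + q = n$. If $B$ is an integral domain, then $C$ is an integral domain; if $B$ is reduced, then $C$ is reduced. -/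
open Polynomial Finset

/-! ### Auxiliary lemmas -/

lemma prodXsubC_coeff {S : Type} [CommRing S] {σ : Type} [Fintype σ] (r : σ → S)
    {k : ℕ} (hk : k ≤ Fintype.card σ) :
    (∏ i, (X - C (r i))).coeff (Fintype.card σ - k) =
      (-1 : S) ^ k * ∑ t ∈ Finset.powersetCard k Finset.univ, ∏ i ∈ t, r i := by
  have h1 : ∀ i ∈ Finset.univ, (X - C (r i) : S[X]) = X + C (-(r i)) := by
    intro i _; rw [map_neg, sub_eq_add_neg]
  rw [Finset.prod_congr rfl h1,
    Finset.prod_X_add_C_coeff Finset.univ (fun i => -(r i)) (Nat.sub_le _ _ |>.trans (by simp))]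
  have h2 : (Finset.univ : Finset σ).card - (Fintype.card σ - k) = k := by
    simp [Finset.card_univ]; omega
  rw [h2, Finset.mul_sum]
  refine Finset.sum_congr rfl fun t ht => ?_
  have htc : t.card = k := (Finset.mem_powersetCard.mp ht).2
  calc (∏ i ∈ t, -r i) = ∏ i ∈ t, (-1) * r i := by simp
    _ = (-1 : S) ^ k * ∏ i ∈ t, r i := by
        rw [Finset.prod_mul_distrib, Finset.prod_const, htc]

noncomputable def genPoly {S : Type} [CommRing S] (p : ℕ) (b : Fin p → S) : S[X] :=
  X ^ p + ∑ i : Fin p, C (b i) * X ^ (p - ((i : ℕ) + 1))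

lemma genPoly_map {S S' : Type} [CommRing S] [CommRing S'] (φ : S →+* S') (p : ℕ)
    (b : Fin p → S) : (genPoly p b).map φ = genPoly p (fun i => φ (b i)) := by
  simp only [genPoly, Polynomial.map_add, Polynomial.map_pow, Polynomial.map_sum,
    Polynomial.map_mul, map_C, map_X]

lemma genPoly_degree_lt {S : Type} [CommRing S] (p : ℕ) (hp : 0 < p) (b : Fin p → S) :
    (∑ i : Fin p, C (b i) * X ^ (p - ((i : ℕ) + 1)) : S[X]).degree < (p : ℕ) := by
  refine lt_of_le_of_lt (Polynomial.degree_sum_le _ _) ?_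
  rw [Finset.sup_lt_iff (by exact_mod_cast WithBot.bot_lt_coe (p : ℕ))]
  intro i _
  refine lt_of_le_of_lt (degree_C_mul_X_pow_le _ _) ?_
  have hi : (i : ℕ) + 1 ≤ p := i.2
  exact_mod_cast (show p - ((i : ℕ) + 1) < p by omega)

lemma genPoly_monic {S : Type} [CommRing S] (p : ℕ) (b : Fin p → S) :
    (genPoly p b).Monic := by
  rcases Nat.eq_zero_or_pos p with hp | hp
  · subst hp
    simp only [genPoly, pow_zero, Finset.univ_eq_empty, Finset.sum_empty, add_zero]
    exact monic_one
  · exact monic_X_pow_add (genPoly_degree_lt p hp b)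

lemma genPoly_natDegree {S : Type} [CommRing S] [Nontrivial S] (p : ℕ) (b : Fin p → S) :
    (genPoly p b).natDegree = p := by
  rcases Nat.eq_zero_or_pos p with hp | hp
  · subst hp
    simp only [genPoly, pow_zero, Finset.univ_eq_empty, Finset.sum_empty, add_zero]
    exact natDegree_one
  · have : (genPoly p b).degree = (p : ℕ) := by
      rw [genPoly, degree_add_eq_left_of_degree_lt
        (by rw [degree_X_pow]; exact genPoly_degree_lt p hp b), degree_X_pow]
    exact natDegree_eq_of_degree_eq_some this

lemma genPoly_coeff {S : Type} [CommRing S] (p : ℕ) (b : Fin p → S) (j : Fin p) :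
    (genPoly p b).coeff (p - ((j : ℕ) + 1)) = b j := by
  have hj : (j : ℕ) + 1 ≤ p := j.2
  rw [genPoly, coeff_add, coeff_X_pow, if_neg (by omega), finset_sum_coeff]
  rw [Finset.sum_eq_single j]
  · simp [coeff_C_mul, coeff_X_pow]
  · intro i _ hij
    rw [coeff_C_mul, coeff_X_pow, if_neg, mul_zero]
    have hi : (i : ℕ) + 1 ≤ p := i.2
    intro h
    exact hij (Fin.ext (by omega))
  · simp

lemma genPoly_eq_self {S : Type} [CommRing S] {p : ℕ} (P : S[X]) (hm : P.Monic)
    (hd : P.natDegree = p) : genPoly p (fun j => P.coeff (p - ((j : ℕ) + 1))) = P := by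
  conv_rhs => rw [hm.as_sum]
  rw [genPoly, hd]
  congr 1
  rw [Fin.sum_univ_eq_sum_range (fun i => C (P.coeff (p - (i + 1))) * X ^ (p - (i + 1)))]
  rw [← Finset.sum_range_reflect]
  refine Finset.sum_congr rfl fun i hi => ?_
  rw [Finset.mem_range] at hi
  have h1 : p - (p - 1 - i + 1) = i := by omega
  rw [h1]

lemma genPoly_eq_of_prod {S : Type} [CommRing S] {p : ℕ} (r : Fin p → S) :
    genPoly p (fun j => (∏ i, (X - C (r i))).coeff (p - ((j : ℕ) + 1)))
      = ∏ i, (X - C (r i)) := by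
  rcases subsingleton_or_nontrivial S with h | h
  · exact Subsingleton.elim _ _
  · refine genPoly_eq_self _ (monic_prod_of_monic _ _ fun i _ => monic_X_sub_C _) ?_
    rw [natDegree_prod_of_monic _ _ fun i _ => monic_X_sub_C _]
    simp [natDegree_X_sub_C]

/-! ### Vieta in both directions -/

lemma rel_of_map_eq_prod {A S : Type} [CommRing A] [CommRing S] {n : ℕ}
    (f : Polynomial A) (η : A →+* S) (ξ : Fin n → S)
    (hsplit : f.map η = ∏ i, (X - C (ξ i))) :
    ∀ k, k ≤ n → η (f.coeff (n - k)) =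
      (-1 : S) ^ k * ∑ t ∈ powersetCard k (univ : Finset (Fin n)), ∏ i ∈ t, ξ i := by
  intro k hk
  rw [← Polynomial.coeff_map, hsplit]
  have h := prodXsubC_coeff ξ (k := k) (by simpa using hk)
  simpa using h

lemma map_eq_prod_of_rel {A S : Type} [CommRing A] [CommRing S] {n : ℕ}
    (f : Polynomial A) (hm : f.Monic) (hd : f.natDegree = n) (η : A →+* S) (ξ : Fin n → S)
    (hrel : ∀ k, 1 ≤ k → k ≤ n → η (f.coeff (n - k)) =
      (-1 : S) ^ k * ∑ t ∈ powersetCard k (univ : Finset (Fin n)), ∏ i ∈ t, ξ i) :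
    f.map η = ∏ i, (X - C (ξ i)) := by
  rcases subsingleton_or_nontrivial S with h | h
  · exact Subsingleton.elim _ _
  have hPm : (∏ i, (X - C (ξ i)) : S[X]).Monic :=
    monic_prod_of_monic _ _ fun i _ => monic_X_sub_C _
  have hPd : (∏ i, (X - C (ξ i)) : S[X]).natDegree = n := by
    rw [natDegree_prod_of_monic _ _ fun i _ => monic_X_sub_C _]
    simp [natDegree_X_sub_C]
  ext m
  rcases lt_trichotomy m n with hmn | hmn | hmn
  · have hk : m = n - (n - m) := by omega
    rw [Polynomial.coeff_map, hk, hrel (n - m) (by omega) (by omega)]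
    have h := prodXsubC_coeff ξ (k := n - m) (by simp)
    simp only [Fintype.card_fin] at h
    rw [h]
  · subst hmn
    have h1 : η (f.coeff m) = 1 := by rw [← hd, hm.coeff_natDegree, map_one]
    have h2 : (∏ i, (X - C (ξ i)) : S[X]).coeff m = 1 := by
      have h3 := hPm.coeff_natDegree
      rwa [hPd] at h3
    rw [Polynomial.coeff_map, h1, h2]
  · rw [Polynomial.coeff_map,
      Polynomial.coeff_eq_zero_of_natDegree_lt (by omega : f.natDegree < m), map_zero,
      Polynomial.coeff_eq_zero_of_natDegree_lt
        (by omega : (∏ i, (X - C (ξ i)) : S[X]).natDegree < m)]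

/-! ### The root-adjunction tower -/

structure SplitTower (R : Type) [CommRing R] (m : ℕ) (b : Fin m → R) where
  T : Type
  [instT : CommRing T]
  j : R →+* T
  r : Fin m → T
  inj : Function.Injective j
  split : (genPoly m b).map j = ∏ i, (X - C (r i))

attribute [instance] SplitTower.instT

lemma adjoin_roots (m : ℕ) : ∀ (R : Type) [CommRing R] (b : Fin m → R),
    Nonempty (SplitTower R m b) := by
  induction m with
  | zero =>
    intro R _ b
    exact ⟨⟨R, RingHom.id R, Fin.elim0, fun _ _ h => h, by simp [genPoly]⟩⟩
  | succ m ih =>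
    intro R _ b
    by_cases hR : Subsingleton R
    · exact ⟨⟨R, RingHom.id R, fun _ => 0, fun _ _ h => h, Subsingleton.elim _ _⟩⟩
    haveI : Nontrivial R := not_subsingleton_iff_nontrivial.mp hR
    set P := genPoly (m + 1) b with hP
    have hPm : P.Monic := genPoly_monic _ _
    have hPd : P.natDegree = m + 1 := genPoly_natDegree _ _
    have hof : Function.Injective (AdjoinRoot.of P) := by
      rw [injective_iff_map_eq_zero]
      intro a ha
      have hdvd : P ∣ Polynomial.C a := AdjoinRoot.mk_eq_zero.mp ha
      obtain ⟨t, ht⟩ := hdvd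
      rcases eq_or_ne t 0 with rfl | ht0
      · rw [mul_zero] at ht
        exact Polynomial.C_eq_zero.mp ht
      · exfalso
        have := congrArg natDegree ht
        rw [natDegree_C, natDegree_mul' (by
          rw [hPm.leadingCoeff, one_mul]; exact leadingCoeff_ne_zero.mpr ht0), hPd] at this
        omega
    haveI : Nontrivial (AdjoinRoot P) :=
      ⟨⟨0, 1, fun h => zero_ne_one (α := R) (hof (by rw [map_zero, map_one]; exact h))⟩⟩
    set ρ := AdjoinRoot.root P
    have hroot : (P.map (AdjoinRoot.of P)).IsRoot ρ := by
      rw [IsRoot, eval_map]; exact AdjoinRoot.eval₂_root P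
    obtain ⟨Q, hQ⟩ := dvd_iff_isRoot.mpr hroot
    have hQm : Q.Monic := (monic_X_sub_C ρ).of_mul_monic_left (hQ ▸ hPm.map _)
    have hQd : Q.natDegree = m := by
      have h1 : (P.map (AdjoinRoot.of P)).natDegree = m + 1 := by
        rw [hPm.natDegree_map, hPd]
      rw [hQ, (monic_X_sub_C ρ).natDegree_mul hQm, natDegree_X_sub_C] at h1
      omega
    obtain ⟨W⟩ := ih (AdjoinRoot P) (fun j => Q.coeff (m - ((j : ℕ) + 1)))
    have hsplit : Q.map W.j = ∏ i, (X - C (W.r i)) := by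
      have h := W.split
      rwa [genPoly_eq_self Q hQm hQd] at h
    refine ⟨⟨W.T, W.j.comp (AdjoinRoot.of P), Fin.cons (W.j ρ) W.r, W.inj.comp hof, ?_⟩⟩
    rw [← Polynomial.map_map, hQ, Polynomial.map_mul, hsplit, Fin.prod_univ_succ]
    simp [Polynomial.map_sub]



/-- The universal monic factor of degree `p`, `g = u^p + b_1 u^(p-1) + ... + b_p`,
with coefficients the variables indexed by `Sum.inl`. -/
noncomputable def univFactorL (A : Type) [CommRing A] (p q : ℕ) :
    Polynomial (MvPolynomial (Fin p ⊕ Fin q) A) :=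
  Polynomial.X ^ p + ∑ i : Fin p,
    Polynomial.C (MvPolynomial.X (Sum.inl i)) * Polynomial.X ^ (p - ((i : ℕ) + 1))

/-- The universal monic factor of degree `q`, `h = u^q + c_1 u^(q-1) + ... + c_q`,
with coefficients the variables indexed by `Sum.inr`. -/
noncomputable def univFactorR (A : Type) [CommRing A] (p q : ℕ) :
    Polynomial (MvPolynomial (Fin p ⊕ Fin q) A) :=
  Polynomial.X ^ q + ∑ i : Fin q,
    Polynomial.C (MvPolynomial.X (Sum.inr i)) * Polynomial.X ^ (q - ((i : ℕ) + 1))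

/-- The ideal of relations for the factorization ring: the coefficients of `g·h - f`. -/
noncomputable def factorIdeal (A : Type) [CommRing A] (p q : ℕ) (f : Polynomial A) :
    Ideal (MvPolynomial (Fin p ⊕ Fin q) A) :=
  Ideal.span (Set.range fun k : ℕ =>
    (univFactorL A p q * univFactorR A p q -
      f.map (MvPolynomial.C : A →+* MvPolynomial (Fin p ⊕ Fin q) A)).coeff k)

/-- The factorization ring `Fact^{p,q}_A(f)`, the universal `A`-algebra carrying a
factorization `f = g·h` with `g, h` monic of degrees `p, q`. -/
noncomputable abbrev FactRing (A : Type) [CommRing A] (p q : ℕ) (f : Polynomial A) : Type :=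
  MvPolynomial (Fin p ⊕ Fin q) A ⧸ factorIdeal A p q f

/-! ### Lifting along a complete splitting -/

lemma lift_of_split {A : Type} [CommRing A] {n : ℕ} (f : Polynomial A)
    {S : Type} [CommRing S] (η : A →+* S) (ξ : Fin n → S)
    (hsplit : f.map η = ∏ i, (X - C (ξ i))) :
    ∃ ψ : SplitRing A n f →+* S,
      (∀ a, ψ (Ideal.Quotient.mk _ (MvPolynomial.C a)) = η a) ∧
      (∀ i, ψ (Ideal.Quotient.mk _ (MvPolynomial.X i)) = ξ i) := by
  have hrel := rel_of_map_eq_prod f η ξ hsplit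
  have hkill : ∀ x ∈ splittingIdeal A n f, MvPolynomial.eval₂Hom η ξ x = 0 := by
    intro x hx
    rw [← RingHom.mem_ker]
    revert x hx
    rw [← SetLike.le_def, splittingIdeal, Ideal.span_le]
    rintro _ ⟨i, rfl⟩
    rw [SetLike.mem_coe, RingHom.mem_ker, map_sub, map_mul, map_pow, map_neg, map_one,
      MvPolynomial.eval₂Hom_C]
    have hesymm : MvPolynomial.eval₂Hom η ξ (MvPolynomial.esymm (Fin n) A ((i : ℕ) + 1))
        = ∑ t ∈ powersetCard ((i : ℕ) + 1) (univ : Finset (Fin n)), ∏ j ∈ t, ξ j := by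
      simp [MvPolynomial.esymm, map_sum, map_prod]
    rw [hesymm, hrel ((i : ℕ) + 1) i.2, sub_self]
  refine ⟨Ideal.Quotient.lift _ _ hkill, fun a => ?_, fun i => ?_⟩
  · rw [Ideal.Quotient.lift_mk, MvPolynomial.eval₂Hom_C]
  · rw [Ideal.Quotient.lift_mk, MvPolynomial.eval₂Hom_X']

lemma splitRing_split {A : Type} [CommRing A] {n : ℕ} (f : Polynomial A) (hm : f.Monic)
    (hd : f.natDegree = n) :
    f.map ((Ideal.Quotient.mk (splittingIdeal A n f)).comp
        (MvPolynomial.C : A →+* MvPolynomial (Fin n) A)) =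
      ∏ i, (X - C (Ideal.Quotient.mk (splittingIdeal A n f) (MvPolynomial.X i))) := by
  apply map_eq_prod_of_rel f hm hd
  intro k hk1 hk2
  set π := Ideal.Quotient.mk (splittingIdeal A n f) with hπdef
  have hπ : ∀ i : Fin n, π (MvPolynomial.C (f.coeff (n - ((i : ℕ) + 1)))) =
      (-1) ^ ((i : ℕ) + 1) * π (MvPolynomial.esymm (Fin n) A ((i : ℕ) + 1)) := by
    intro i
    have h0 : π (MvPolynomial.C (f.coeff (n - ((i : ℕ) + 1))) -
        (-1 : MvPolynomial (Fin n) A) ^ ((i : ℕ) + 1)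
          * MvPolynomial.esymm (Fin n) A ((i : ℕ) + 1)) = 0 :=
      Ideal.Quotient.eq_zero_iff_mem.mpr (Ideal.subset_span (Set.mem_range_self i))
    rw [map_sub, sub_eq_zero] at h0
    rw [h0, map_mul, map_pow, map_neg, map_one]
  obtain ⟨i, hik⟩ : ∃ i : Fin n, (i : ℕ) + 1 = k := ⟨⟨k - 1, by omega⟩, by simp; omega⟩
  rw [← hik, RingHom.comp_apply, hπ i]
  congr 1
  simp [MvPolynomial.esymm, map_sum, map_prod]


set_option maxHeartbeats 2000000 in
/-- For `f` monic of degree `n = p + q`: if the splitting ring `B = Split_A(f)` is an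
integral domain then the factorization ring `C = Fact^{p,q}_A(f)` is an integral domain,
and if `B` is reduced then `C` is reduced. -/
theorem stmt6 (A : Type) [CommRing A] (p q : ℕ) (f : Polynomial A)
    (hmonic : f.Monic) (hdeg : f.natDegree = p + q) :
    (IsDomain (SplitRing A (p + q) f) → IsDomain (FactRing A p q f)) ∧
    (IsReduced (SplitRing A (p + q) f) → IsReduced (FactRing A p q f)) := by
  set πC := Ideal.Quotient.mk (factorIdeal A p q f) with hπC
  set πB := Ideal.Quotient.mk (splittingIdeal A (p + q) f) with hπB
  set bL : Fin p → MvPolynomial (Fin p ⊕ Fin q) A := fun i => MvPolynomial.X (Sum.inl i) with hbL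
  set bR : Fin q → MvPolynomial (Fin p ⊕ Fin q) A := fun i => MvPolynomial.X (Sum.inr i) with hbR
  have hL : univFactorL A p q = genPoly p bL := rfl
  have hR : univFactorR A p q = genPoly q bR := rfl
  -- the universal factorization in C
  have h0 : (univFactorL A p q * univFactorR A p q -
      f.map (MvPolynomial.C : A →+* MvPolynomial (Fin p ⊕ Fin q) A)).map πC = 0 := by
    ext k
    rw [Polynomial.coeff_map, Polynomial.coeff_zero]
    exact Ideal.Quotient.eq_zero_iff_mem.mpr (Ideal.subset_span (Set.mem_range_self k))
  rw [Polynomial.map_sub, sub_eq_zero, Polynomial.map_mul] at h0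
  have hfC : genPoly p (fun i => πC (bL i)) * genPoly q (fun i => πC (bR i)) =
      f.map (πC.comp (MvPolynomial.C : A →+* MvPolynomial (Fin p ⊕ Fin q) A)) := by
    rw [← genPoly_map, ← genPoly_map, ← hL, ← hR, h0, Polynomial.map_map]
  -- tower over C
  obtain ⟨W1⟩ := adjoin_roots p (FactRing A p q f) (fun i => πC (bL i))
  obtain ⟨W2⟩ := adjoin_roots q W1.T (fun i => W1.j (πC (bR i)))
  set j : FactRing A p q f →+* W2.T := W2.j.comp W1.j with hj
  have hjinj : Function.Injective j := W2.inj.comp W1.inj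
  set rr : Fin (p + q) → W2.T :=
    fun i => Sum.elim (fun a => W2.j (W1.r a)) W2.r (finSumFinEquiv.symm i) with hrr
  have hsplitT : f.map (j.comp (πC.comp
      (MvPolynomial.C : A →+* MvPolynomial (Fin p ⊕ Fin q) A))) = ∏ i, (X - C (rr i)) := by
    have e1 : f.map (j.comp (πC.comp MvPolynomial.C)) =
        (genPoly p (fun i => πC (bL i)) * genPoly q (fun i => πC (bR i))).map j := by
      rw [hfC, Polynomial.map_map]
    rw [e1, hj, ← Polynomial.map_map, Polynomial.map_mul, Polynomial.map_mul, W1.split,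
      genPoly_map, W2.split, Polynomial.map_prod]
    simp only [Polynomial.map_sub, Polynomial.map_X, Polynomial.map_C]
    rw [← Equiv.prod_comp finSumFinEquiv (fun i => (X - C (rr i))), Fintype.prod_sum_type]
    simp [hrr, Equiv.symm_apply_apply]
  obtain ⟨ψ, hψC, hψX⟩ := lift_of_split f _ rr hsplitT
  -- the comparison map φ : C → B
  set ξ : Fin (p + q) → SplitRing A (p + q) f := fun i => πB (MvPolynomial.X i) with hξ
  have hsplitB : f.map (πB.comp (MvPolynomial.C : A →+* MvPolynomial (Fin (p + q)) A)) =
      ∏ i, (X - C (ξ i)) := splitRing_split f hmonic hdeg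
  set G : Polynomial (SplitRing A (p + q) f) :=
    ∏ i : Fin p, (X - C (ξ (finSumFinEquiv (Sum.inl i)))) with hG
  set H : Polynomial (SplitRing A (p + q) f) :=
    ∏ i : Fin q, (X - C (ξ (finSumFinEquiv (Sum.inr i)))) with hH
  set bB : Fin p ⊕ Fin q → SplitRing A (p + q) f :=
    Sum.elim (fun i => G.coeff (p - ((i : ℕ) + 1))) (fun i => H.coeff (q - ((i : ℕ) + 1)))
    with hbB
  set φ := MvPolynomial.eval₂Hom (πB.comp
    (MvPolynomial.C : A →+* MvPolynomial (Fin (p + q)) A)) bB with hφ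
  have hφL : (univFactorL A p q).map φ = G := by
    rw [hL, genPoly_map]
    have he : (fun i : Fin p => φ (bL i)) =
        fun i : Fin p => G.coeff (p - ((i : ℕ) + 1)) := by
      funext i
      rw [hbL, hφ, MvPolynomial.eval₂Hom_X', hbB]
      rfl
    rw [he, hG]
    exact genPoly_eq_of_prod _
  have hφR : (univFactorR A p q).map φ = H := by
    rw [hR, genPoly_map]
    have he : (fun i : Fin q => φ (bR i)) =
        fun i : Fin q => H.coeff (q - ((i : ℕ) + 1)) := by
      funext i
      rw [hbR, hφ, MvPolynomial.eval₂Hom_X', hbB]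
      rfl
    rw [he, hH]
    exact genPoly_eq_of_prod _
  have hGH : G * H = f.map (πB.comp (MvPolynomial.C : A →+* MvPolynomial (Fin (p + q)) A)) := by
    rw [hsplitB, ← Equiv.prod_comp finSumFinEquiv (fun i => (X - C (ξ i))),
      Fintype.prod_sum_type]
  have hkill2 : ∀ x ∈ factorIdeal A p q f, φ x = 0 := by
    intro x hx
    rw [← RingHom.mem_ker]
    revert x hx
    rw [← SetLike.le_def, factorIdeal, Ideal.span_le]
    rintro _ ⟨k, rfl⟩
    rw [SetLike.mem_coe, RingHom.mem_ker, ← Polynomial.coeff_map, Polynomial.map_sub,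
      Polynomial.map_mul, hφL, hφR, Polynomial.map_map, hφ, MvPolynomial.eval₂Hom_comp_C, hGH,
      sub_self, Polynomial.coeff_zero]
  set φbar := Ideal.Quotient.lift (factorIdeal A p q f) φ hkill2 with hφbar
  -- the composite ψ ∘ φbar is the injective map j
  have hcomp : (ψ.comp φbar).comp πC = j.comp πC := by
    apply MvPolynomial.ringHom_ext
    · intro a
      rw [RingHom.comp_apply, RingHom.comp_apply, RingHom.comp_apply, hφbar,
        Ideal.Quotient.lift_mk, hφ, MvPolynomial.eval₂Hom_C]
      exact hψC a
    · intro s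
      have hψξ : ∀ m : Fin (p + q), ψ (ξ m) = rr m := hψX
      cases s with
      | inl i =>
        have h1 : φbar (πC (MvPolynomial.X (Sum.inl i))) = G.coeff (p - ((i : ℕ) + 1)) := by
          rw [hφbar, hπC, Ideal.Quotient.lift_mk, hφ, MvPolynomial.eval₂Hom_X', hbB]
          rfl
        have hGmap : G.map ψ = (genPoly p (fun a => πC (bL a))).map j := by
          rw [hj, ← Polynomial.map_map, W1.split, hG, Polynomial.map_prod,
            Polynomial.map_prod]
          simp only [Polynomial.map_sub, Polynomial.map_X, Polynomial.map_C]
          refine Finset.prod_congr rfl fun a _ => ?_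
          rw [hψξ, hrr]
          simp
        rw [RingHom.comp_apply, RingHom.comp_apply, RingHom.comp_apply, h1,
          ← Polynomial.coeff_map, hGmap, Polynomial.coeff_map, genPoly_coeff]
      | inr i =>
        have h1 : φbar (πC (MvPolynomial.X (Sum.inr i))) = H.coeff (q - ((i : ℕ) + 1)) := by
          rw [hφbar, hπC, Ideal.Quotient.lift_mk, hφ, MvPolynomial.eval₂Hom_X', hbB]
          rfl
        have hHmap : H.map ψ = (genPoly q (fun a => W1.j (πC (bR a)))).map W2.j := by
          rw [W2.split, hH, Polynomial.map_prod]
          try rw [Polynomial.map_prod]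
          simp only [Polynomial.map_sub, Polynomial.map_X, Polynomial.map_C]
          refine Finset.prod_congr rfl fun a _ => ?_
          rw [hψξ, hrr]
          simp
        rw [RingHom.comp_apply, RingHom.comp_apply, RingHom.comp_apply, h1,
          ← Polynomial.coeff_map, hHmap, Polynomial.coeff_map, genPoly_coeff, hj]
        rfl
  have hc : ∀ x : FactRing A p q f, ψ (φbar x) = j x := by
    intro x
    obtain ⟨y, rfl⟩ := Ideal.Quotient.mk_surjective x
    exact RingHom.congr_fun hcomp y
  have hinj : Function.Injective φbar := by
    intro a b hab
    apply hjinj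
    rw [← hc a, ← hc b, hab]
  constructor
  · intro hB
    haveI := hB
    exact Function.Injective.isDomain φbar hinj
  · intro hB
    haveI := hB
    refine ⟨fun x hx => ?_⟩
    apply hinj
    rw [map_zero]
    exact IsReduced.eq_zero _ (hx.map φbar)
end

section
/- Let $S$ be a commutative local ring with maximal ideal $\mathfrak{m}$ and residue field $k = S/\mathfrak{m}$, and let $X$ be an $n \times n$ matrix with entries in $S$. If the reduction of $X$ modulo $\mathfrak{m}$, viewed as a linear map over $k$, has kernel of dimension at least $r$, then $\det(X) \in \mathfrak{m}^r$. -/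
/-!
Extend a basis of the kernel of `X mod 𝔪` to a basis of `kⁿ` and lift the resulting invertible
change-of-basis matrix to a matrix `P` over `S`; its determinant is a unit because `S` is local.
Then `r` columns of `X * P` have all their entries in `𝔪`, and expanding `det (X * P)` by the
Leibniz formula puts every term in `𝔪 ^ r`.
-/

open IsLocalRing Matrix Finset

theorem Ideal.prod_mem_pow_card {R ι : Type*} [CommSemiring R] (I : Ideal R) {s : Finset ι}
    {x : ι → R} (hx : ∀ i ∈ s, x i ∈ I) : ∏ i ∈ s, x i ∈ I ^ #s := by
  simpa using Ideal.prod_mem_prod hx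

theorem Matrix.det_mem_pow_card_of_col_mem {R m : Type*} [CommRing R] [Fintype m] [DecidableEq m]
    (I : Ideal R) {M : Matrix m m R} {T : Finset m} (hM : ∀ j ∈ T, ∀ i, M i j ∈ I) :
    M.det ∈ I ^ #T := by
  rw [det_apply]
  refine Submodule.sum_mem _ fun σ _ => Submodule.smul_of_tower_mem _ _ ?_
  rw [← prod_mul_prod_compl T]
  exact Ideal.mul_mem_right _ _ (I.prod_mem_pow_card fun j hj => hM j hj _)

theorem Module.Basis.sumExtend_inl {K V ι : Type*} [DivisionRing K] [AddCommGroup V] [Module K V]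
    {v : ι → V} (hv : LinearIndependent K v) (k : ι) :
    Module.Basis.sumExtend hv (.inl k) = v k := by
  simp only [Module.Basis.sumExtend, Module.Basis.reindex_apply, Module.Basis.coe_extend]
  rfl

theorem LinearIndependent.exists_isUnit_col_eq {K m ι : Type*} [Field K] [Fintype m]
    [DecidableEq m] {w : ι → m → K} (hw : LinearIndependent K w) :
    ∃ (Q : Matrix m m K) (f : ι ↪ m), IsUnit Q ∧ ∀ k, Q.col (f k) = w k := by
  let b := Module.Basis.sumExtend hw
  have := FiniteDimensional.fintypeBasisIndex b
  let e : m ≃ _ := Fintype.equivOfCardEq (by simpa using Module.finrank_eq_card_basis b)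
  refine ⟨of fun i j => b (e j) i, Function.Embedding.inl.trans e.symm.toEmbedding, ?_,
    fun k => ?_⟩
  · exact linearIndependent_cols_iff_isUnit.mp (b.linearIndependent.comp e e.injective)
  · ext i
    simp [b, Module.Basis.sumExtend_inl]

theorem Matrix.map_surjective {α β m n : Type*} {f : α → β} (hf : Function.Surjective f) :
    Function.Surjective fun M : Matrix m n α => M.map f :=
  hf.comp_left.comp_left

theorem Matrix.isUnit_det_of_isUnit_det_map {R S m : Type*} [CommRing R] [CommRing S] [Fintype m]
    [DecidableEq m] (f : R →+* S) [IsLocalHom f] {M : Matrix m m R} (h : IsUnit (M.map f).det) :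
    IsUnit M.det :=
  (isUnit_map_iff f _).mp (f.map_det M ▸ h)

/-- Let `S` be a commutative local ring with maximal ideal `𝔪` and residue field `k`, and
let `X` be an `n × n` matrix over `S`. If the reduction of `X` modulo `𝔪`, viewed as a
`k`-linear map, has kernel of dimension at least `r`, then `det X ∈ 𝔪^r`. -/
theorem stmt7 (S : Type) [CommRing S] [IsLocalRing S] (n r : ℕ)
    (X : Matrix (Fin n) (Fin n) S)
    (h : r ≤ Module.finrank (IsLocalRing.ResidueField S)
      (LinearMap.ker (Matrix.mulVecLin (X.map (IsLocalRing.residue S))))) :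
    X.det ∈ IsLocalRing.maximalIdeal S ^ r := by
  obtain ⟨v, hv⟩ := exists_linearIndependent_of_le_finrank h
  obtain ⟨Q, f, hQ, hQv⟩ := (hv.map' _ (Submodule.ker_subtype _)).exists_isUnit_col_eq
  obtain ⟨P, rfl⟩ := map_surjective residue_surjective Q
  have hP : IsUnit P.det :=
    isUnit_det_of_isUnit_det_map (residue S) ((isUnit_iff_isUnit_det _).mp hQ)
  have hXP : ∀ j ∈ univ.map f, ∀ i, (X * P) i j ∈ maximalIdeal S := by
    simp only [mem_map, mem_univ, true_and, forall_exists_index, forall_apply_eq_imp_iff]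
    intro k i
    have hcol : (P.map (residue S)).col (f k) = v k := hQv k
    have hker : X.map (residue S) *ᵥ v k = 0 := LinearMap.mem_ker.mp (v k).2
    rw [← residue_eq_zero_iff]
    calc residue S ((X * P) i (f k))
        = (X.map (residue S) * P.map (residue S)) i (f k) := by rw [← Matrix.map_mul]; rfl
      _ = (X.map (residue S) *ᵥ v k) i := by rw [← hcol]; rfl
      _ = 0 := by rw [hker]; rfl
  simpa [det_mul, Ideal.mul_unit_mem_iff_mem _ hP] using det_mem_pow_card_of_col_mem _ hXP
end

section
/- Let $V_0 = \mathbb{C}^n$, $V_1 = \mathbb{C}^m$, $r \ge s \ge 0$ with $\delta = \max(m-n+r-s, 0)$, and suppose $(f, g, R_0, R_1)$ is a tuple where $R_0 \subseteq V_0$ has dimension $r$, $R_1 \subseteq V_1$ has dimension $s$, $f\colon V_0 \to V_1$ satisfies $f(R_0) \subseteq R_1$ and $\mathrm{rank}(f) \le m-\delta$, and $g\colon V_1 \to V_0$ satisfies $g(R_1) \subseteq R_0$. Then the characteristic polynomial $p(u)$ of $fg|_{R_1}$ (noting $fg$ preserves $R_1$) divides $\bar{\chi}(u) = u^{-\delta}\det(u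 - fg)$. -/
/-!
With respect to a complement of `R₁`, the endomorphism `fg` is block upper triangular, so its
characteristic polynomial is that of `fg|_{R₁}` times that of the map `fg` induces on `V₁/R₁`.
This induced map factors through `V₀ → V₁/R₁`, which kills `R₀`; hence its rank is at most
`n - r`, its kernel has dimension at least `(m - s) - (n - r)`, and `u^δ` divides its
characteristic polynomial.
-/

open Module Polynomial Submodule

namespace LinearMap

variable {K : Type*} [Field K]

theorem charpoly_eq_mul_of_snd_comp_comp_inl_eq_zero {M₁ M₂ : Type*} [AddCommGroup M₁]
    [AddCommGroup M₂] [Module K M₁] [Module K M₂] [FiniteDimensional K M₁]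
    [FiniteDimensional K M₂] (ψ : Module.End K (M₁ × M₂))
    (h : snd K M₁ M₂ ∘ₗ ψ ∘ₗ inl K M₁ M₂ = 0) :
    ψ.charpoly = (fst K M₁ M₂ ∘ₗ ψ ∘ₗ inl K M₁ M₂).charpoly *
      (snd K M₁ M₂ ∘ₗ ψ ∘ₗ inr K M₁ M₂).charpoly := by
  classical
  let b₁ := finBasis K M₁
  let b₂ := finBasis K M₂
  have h' : ∀ x, (ψ (x, 0)).2 = 0 := fun x => LinearMap.congr_fun h x
  rw [← charpoly_toMatrix ψ (b₁.prod b₂), ← charpoly_toMatrix _ b₁, ← charpoly_toMatrix _ b₂]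
  have hM : toMatrix (b₁.prod b₂) (b₁.prod b₂) ψ =
      Matrix.fromBlocks (toMatrix b₁ b₁ (fst K M₁ M₂ ∘ₗ ψ ∘ₗ inl K M₁ M₂))
        (Matrix.of fun i j => b₁.repr (ψ (0, b₂ j)).1 i) 0
        (toMatrix b₂ b₂ (snd K M₁ M₂ ∘ₗ ψ ∘ₗ inr K M₁ M₂)) := by
    ext (i | i) (j | j) <;> simp [toMatrix_apply, h']
  rw [hM, Matrix.charpoly_fromBlocks_zero₂₁]

theorem charpoly_eq_charpoly_restrict_mul_charpoly_mapQ {V : Type*} [AddCommGroup V]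
    [Module K V] [FiniteDimensional K V] (φ : Module.End K V) (p : Submodule K V)
    (hp : ∀ x ∈ p, φ x ∈ p) :
    φ.charpoly = (φ.restrict hp).charpoly * (p.mapQ p φ hp).charpoly := by
  obtain ⟨q, hpq⟩ := p.exists_isCompl
  let e := p.prodEquivOfIsCompl q hpq
  have hψ : snd K p q ∘ₗ e.symm.conj φ ∘ₗ inl K p q = 0 := by
    ext x
    simp [LinearEquiv.conj_apply, e, hp x x.2]
  have hfst : fst K p q ∘ₗ e.symm.conj φ ∘ₗ inl K p q = φ.restrict hp := by
    ext x
    simp [LinearEquiv.conj_apply, e, projectionOnto_apply_of_mem_left hpq (hp x x.2)]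
  have hsnd : snd K p q ∘ₗ e.symm.conj φ ∘ₗ inr K p q =
      (p.quotientEquivOfIsCompl q hpq).conj (p.mapQ p φ hp) := by
    ext x
    simp [LinearEquiv.conj_apply, e]
  rw [← e.symm.charpoly_conj φ, charpoly_eq_mul_of_snd_comp_comp_inl_eq_zero _ hψ, hfst, hsnd,
    LinearEquiv.charpoly_conj]

theorem X_pow_dvd_charpoly_of_le_finrank_ker {V : Type*} [AddCommGroup V] [Module K V]
    [FiniteDimensional K V] (φ : Module.End K V) {k : ℕ} (hk : k ≤ finrank K (ker φ)) :
    X ^ k ∣ φ.charpoly := by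
  have hker : finrank K (ker φ) ≤ φ.charpoly.natTrailingDegree := by
    rw [← finrank_maxGenEigenspace_zero_eq, ← Module.End.eigenspace_zero]
    exact finrank_mono Module.End.eigenspace_le_maxGenEigenspace
  exact X_pow_dvd_iff.mpr fun d hd => coeff_eq_zero_of_lt_natTrailingDegree (by omega)

theorem finrank_add_finrank_le_finrank_add_finrank_ker_mapQ {V₀ V₁ : Type*} [AddCommGroup V₀]
    [AddCommGroup V₁] [Module K V₀] [Module K V₁] [FiniteDimensional K V₀]
    [FiniteDimensional K V₁] (f : V₀ →ₗ[K] V₁) (g : V₁ →ₗ[K] V₀) {R₀ : Submodule K V₀}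
    {R₁ : Submodule K V₁} (hf : ∀ x ∈ R₀, f x ∈ R₁) (hfg : ∀ y ∈ R₁, (f ∘ₗ g) y ∈ R₁) :
    finrank K V₁ + finrank K R₀ ≤
      finrank K V₀ + finrank K R₁ + finrank K (ker (R₁.mapQ R₁ (f ∘ₗ g) hfg)) := by
  let u := R₁.mkQ ∘ₗ f
  have hR₀ : R₀ ≤ ker u := fun x hx => (Quotient.mk_eq_zero R₁).mpr (hf x hx)
  have hrange : range (R₁.mapQ R₁ (f ∘ₗ g) hfg) ≤ range u := by
    rintro _ ⟨y, rfl⟩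
    induction y using Quotient.induction_on with
    | _ y => exact ⟨g y, rfl⟩
  have hker_u := finrank_mono hR₀
  have hrange_le := finrank_mono hrange
  have hrank_u := u.finrank_range_add_finrank_ker
  have hrank_mapQ := (R₁.mapQ R₁ (f ∘ₗ g) hfg).finrank_range_add_finrank_ker
  have hquot := R₁.finrank_quotient_add_finrank
  omega

end LinearMap

theorem stmt13_general (n m r s : ℕ)
    (f : (Fin n → ℂ) →ₗ[ℂ] (Fin m → ℂ)) (g : (Fin m → ℂ) →ₗ[ℂ] (Fin n → ℂ))
    (R0 : Submodule ℂ (Fin n → ℂ)) (R1 : Submodule ℂ (Fin m → ℂ))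
    (hR0 : Module.finrank ℂ R0 = r) (hR1 : Module.finrank ℂ R1 = s)
    (hfR : ∀ x ∈ R0, f x ∈ R1)
    (hfg : ∀ y ∈ R1, (f ∘ₗ g) y ∈ R1) :
    ∃ chibar : Polynomial ℂ,
      (f ∘ₗ g).charpoly = Polynomial.X ^ (m + r - (n + s)) * chibar ∧
      ((f ∘ₗ g).restrict hfg).charpoly ∣ chibar := by
  have hdim := LinearMap.finrank_add_finrank_le_finrank_add_finrank_ker_mapQ f g hfR hfg
  rw [finrank_fin_fun, finrank_fin_fun, hR0, hR1] at hdim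
  obtain ⟨χ, hχ⟩ := LinearMap.X_pow_dvd_charpoly_of_le_finrank_ker (R1.mapQ R1 (f ∘ₗ g) hfg)
    (k := m + r - (n + s)) (by omega)
  refine ⟨((f ∘ₗ g).restrict hfg).charpoly * χ, ?_, dvd_mul_right _ _⟩
  rw [LinearMap.charpoly_eq_charpoly_restrict_mul_charpoly_mapQ _ R1 hfg, hχ]
  ring

/-- Let `V₀ = ℂ^n`, `V₁ = ℂ^m`, `r ≥ s ≥ 0` and `δ = max(m - n + r - s, 0)`. Suppose
`R₀ ⊆ V₀` has dimension `r`, `R₁ ⊆ V₁` has dimension `s`, `f : V₀ → V₁` satisfies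
`f(R₀) ⊆ R₁` and `rank f ≤ m - δ`, and `g : V₁ → V₀` satisfies `g(R₁) ⊆ R₀` (so that
`f ∘ g` preserves `R₁`). Then, writing `charpoly(f∘g) = u^δ · χ̄(u)`, the characteristic
polynomial of `(f ∘ g)|_{R₁}` divides `χ̄`. -/
theorem stmt13 (n m r s : ℕ) (hrs : s ≤ r)
    (f : (Fin n → ℂ) →ₗ[ℂ] (Fin m → ℂ)) (g : (Fin m → ℂ) →ₗ[ℂ] (Fin n → ℂ))
    (R0 : Submodule ℂ (Fin n → ℂ)) (R1 : Submodule ℂ (Fin m → ℂ))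
    (hR0 : Module.finrank ℂ R0 = r) (hR1 : Module.finrank ℂ R1 = s)
    (hfR : ∀ x ∈ R0, f x ∈ R1) (hgR : ∀ y ∈ R1, g y ∈ R0)
    (hrank : Module.finrank ℂ (LinearMap.range f) ≤ m - (m + r - (n + s)))
    (hfg : ∀ y ∈ R1, (f ∘ₗ g) y ∈ R1) :
    ∃ chibar : Polynomial ℂ,
      (f ∘ₗ g).charpoly = Polynomial.X ^ (m + r - (n + s)) * chibar ∧
      ((f ∘ₗ g).restrict hfg).charpoly ∣ chibar :=
  stmt13_general n m r s f g R0 R1 hR0 hR1 hfR hfg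
end

section
/- Fix complex vector spaces $V_0 = \mathbb{C}^n$, $V_1 = \mathbb{C}^m$ and integers $r \ge s \ge 0$; set $\delta = \max(m-n+r-s, 0)$. Let $(f, g)$ be any pair with $f\colon V_0 \to V_1$ of rank $\le m - \delta$ and $g\colon V_1 \to V_0$, and let $\lambda_1, \ldots, \lambda_{m-\delta}$ be the roots (with multiplicity) of $\bar{\chi}(u) = u^{-\delta}\det(u - fg)$ in any chosen order. Then there exist chains of subspaces $F_{r-s} \subset F_{r-s+1} \subset \cdots \subset F_{r-s+m-\delta} \subseteq V_0$ and $0 = G_0 \subset G_1 \subset \cdots \subset G_{m-\delta} \subseteq V_1$ with $\dim F_{r-s+i} = r-s+i$ and $\dim G_i = i$, such that $f(F_{r-s+i}) \subseteq G_i$ and $g(G_i) \subseteq F_{r-s+i}$ for all $i \ge 0$, and $fg$ acts on $G_i/G_{i-1}$ by the scalar $\lambda_i$ for $1 \le i \le m-\delta$. -/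
/-!
Write `h = f ∘ g` and `k = m - δ`. Since `h` maps into `range f`, every `k`-dimensional
`U ⊇ range f` is `h`-invariant, and the factor `X ^ δ` of the characteristic polynomial is
exactly the contribution of `V₁ ⧸ U`, on which `h` is zero. Hence `h|_U` has the eigenvalues
`λ₁, …, λ_k` and can be triangularised in that order; this is the flag `G`. The flag `F` is then
built one step at a time: `F_{r-s+i}` is squeezed between `F_{r-s+i-1} + g(G_i)`, of dimension
at most `r-s+i` because `G_i / G_{i-1}` is a line, and `f⁻¹(G_i)`, of dimension at least
`n - k + i ≥ r-s+i` because `G_i + range f ⊆ U`.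
-/

open Polynomial Module

theorem Polynomial.natDegree_X_pow_mul_prod_X_sub_C {R ι : Type*} [CommRing R] [Nontrivial R]
    [Fintype ι] (δ : ℕ) (lam : ι → R) :
    (X ^ δ * ∏ i, (X - C (lam i))).natDegree = δ + Fintype.card ι := by
  rw [(monic_X_pow δ).natDegree_mul (monic_prod_of_monic _ _ fun i _ => monic_X_sub_C (lam i)),
    natDegree_X_pow, natDegree_prod_of_monic _ _ fun i _ => monic_X_sub_C (lam i)]
  simp

section CharpolyQuotient

variable {R V : Type*} [CommRing R] [AddCommGroup V] [Module R V] [Module.Free R V]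
  [Module.Finite R V] (W : Submodule R V) [Module.Free R W] [Module.Finite R W]
  [Module.Free R (V ⧸ W)] [Module.Finite R (V ⧸ W)]

open Module.Basis in
theorem LinearMap.charpoly_eq_charpoly_restrict_mul_charpoly_mapQ_s14 (e : V →ₗ[R] V)
    (he : W ≤ W.comap e) :
    e.charpoly = (e.restrict he).charpoly * (W.mapQ W e he).charpoly := by
  classical
  let bW := Module.Free.chooseBasis R W
  let bQ := Module.Free.chooseBasis R (V ⧸ W)
  let b := sumQuot bW bQ
  have hblocks : LinearMap.toMatrix b b e = Matrix.fromBlocks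
      (LinearMap.toMatrix bW bW (e.restrict he))
      (Matrix.of fun i l ↦ b.repr (e (b (Sum.inr l))) (Sum.inl i)) 0
      (LinearMap.toMatrix bQ bQ (W.mapQ W e he)) := by
    ext (i | j) (k | l)
    · simp only [b, sumQuot_inl, Matrix.fromBlocks_apply₁₁, LinearMap.toMatrix_apply]
      apply sumQuot_repr_inl_of_mem
    · simp [b, LinearMap.toMatrix_apply, Matrix.fromBlocks_apply₁₂]
    · suffices W.mkQ (e (bW k)) = 0 by simp [LinearMap.toMatrix_apply, b, this]
      rw [← LinearMap.mem_ker, Submodule.ker_mkQ]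
      exact he (bW k).2
    · simp only [LinearMap.toMatrix_apply, sumQuot_repr_inr, Matrix.fromBlocks_apply₂₂, b]
      rw [← sumQuot_inr bW bQ l, W.mapQ_apply]
      simp
  rw [← LinearMap.charpoly_toMatrix e b, hblocks, Matrix.charpoly_fromBlocks_zero₂₁,
    LinearMap.charpoly_toMatrix, LinearMap.charpoly_toMatrix]

end CharpolyQuotient

theorem LinearMap.charpoly_smul_id {R V : Type*} [CommRing R] [StrongRankCondition R]
    [AddCommGroup V] [Module R V] [Module.Free R V] [Module.Finite R V] (μ : R) :
    (μ • LinearMap.id : V →ₗ[R] V).charpoly = (X - C μ) ^ finrank R V := by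
  classical
  rw [LinearMap.charpoly_def, map_smul, LinearMap.toMatrix_id, Matrix.smul_one_eq_diagonal,
    Matrix.charpoly_diagonal, Finset.prod_const, Finset.card_univ,
    Module.finrank_eq_card_chooseBasisIndex]

theorem LinearMap.charpoly_eq_charpoly_restrict_mul_X_pow {K V : Type*} [Field K]
    [AddCommGroup V] [Module K V] [FiniteDimensional K V] (E : V →ₗ[K] V) {p : Submodule K V}
    (hp : ∀ x, E x ∈ p) :
    E.charpoly = (E.restrict fun x _ => hp x).charpoly * X ^ finrank K (V ⧸ p) := by
  have hzero : p.mapQ p E (fun x _ => hp x) = 0 := by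
    ext x
    simpa using hp x
  rw [E.charpoly_eq_charpoly_restrict_mul_charpoly_mapQ_s14 p (fun x _ => hp x), hzero,
    LinearMap.charpoly_zero]

namespace Submodule

variable {K V : Type*} [DivisionRing K] [AddCommGroup V] [Module K V] [FiniteDimensional K V]

theorem exists_finrank_eq_of_le {B A : Submodule K V} (hBA : B ≤ A) {d : ℕ}
    (hB : finrank K B ≤ d) (hA : d ≤ finrank K A) :
    ∃ C : Submodule K V, B ≤ C ∧ C ≤ A ∧ finrank K C = d := by
  induction d, hB using Nat.le_induction with
  | base => exact ⟨B, le_rfl, hBA, rfl⟩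
  | succ d _ ih =>
    obtain ⟨C, hBC, hCA, hC⟩ := ih (by omega)
    obtain ⟨v, hvA, hvC⟩ := SetLike.exists_of_lt (lt_of_le_of_ne hCA (by rintro rfl; omega))
    refine ⟨C ⊔ K ∙ v, hBC.trans le_sup_left,
      sup_le hCA ((span_singleton_le_iff_mem v A).mpr hvA), ?_⟩
    rw [finrank_sup_span_singleton hvC, hC]

theorem finrank_sup_span_singleton_le (p : Submodule K V) (v : V) :
    finrank K (p ⊔ K ∙ v : Submodule K V) ≤ finrank K p + 1 := by
  by_cases hv : v ∈ p
  · rw [sup_eq_left.mpr ((span_singleton_le_iff_mem v p).mpr hv)]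
    omega
  · rw [finrank_sup_span_singleton hv]

theorem exists_le_sup_span_singleton {p q : Submodule K V} (hpq : p ≤ q)
    (hq : finrank K q ≤ finrank K p + 1) : ∃ v, q ≤ p ⊔ K ∙ v := by
  by_cases hqp : q ≤ p
  · exact ⟨0, hqp.trans le_sup_left⟩
  obtain ⟨v, hvq, hvp⟩ := SetLike.exists_of_lt (lt_of_le_not_ge hpq hqp)
  refine ⟨v, (eq_of_le_of_finrank_le (sup_le hpq ((span_singleton_le_iff_mem v q).mpr hvq))
    ?_).ge⟩
  rw [finrank_sup_span_singleton hvp]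
  exact hq

theorem finrank_comap_add_finrank_sup_range {W : Type*} [AddCommGroup W] [Module K W]
    [FiniteDimensional K W] (f : V →ₗ[K] W) (q : Submodule K W) :
    finrank K (q.comap f) + finrank K (q ⊔ LinearMap.range f : Submodule K W) =
      finrank K V + finrank K q := by
  have hrange : LinearMap.range (f.domRestrict (q.comap f)) = q ⊓ LinearMap.range f := by
    rw [LinearMap.range_domRestrict, map_comap_eq, inf_comm]
  have hker : finrank K (LinearMap.ker (f.domRestrict (q.comap f))) =
      finrank K (LinearMap.ker f) := by
    rw [LinearMap.ker_domRestrict]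
    exact (comapSubtypeEquivOfLe (LinearMap.ker_le_comap f)).finrank_eq
  have h₁ := (f.domRestrict (q.comap f)).finrank_range_add_finrank_ker
  have h₂ := f.finrank_range_add_finrank_ker
  have h₃ := finrank_sup_add_finrank_inf_eq q (LinearMap.range f)
  rw [hrange, hker] at h₁
  omega

theorem finrank_comap_mkQ (p : Submodule K V) (q : Submodule K (V ⧸ p)) :
    finrank K (q.comap p.mkQ) = finrank K q + finrank K p := by
  have h := finrank_comap_add_finrank_sup_range p.mkQ q
  rw [range_mkQ, sup_top_eq, finrank_top, ← p.finrank_quotient_add_finrank] at h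
  omega

theorem exists_monotone_finrank_eq_between {k d : ℕ} {A B : Fin (k + 1) → Submodule K V}
    (hA : Monotone A) (hBA : ∀ i, B i ≤ A i)
    (hB : ∀ i : Fin k, ∃ v, B i.succ ≤ B i.castSucc ⊔ K ∙ v)
    (hB₀ : finrank K (B 0) ≤ d) (hA_finrank : ∀ i, d + i ≤ finrank K (A i)) :
    ∃ F : Fin (k + 1) → Submodule K V, Monotone F ∧ (∀ i, B i ≤ F i) ∧ (∀ i, F i ≤ A i) ∧
      ∀ i, finrank K (F i) = d + i := by
  induction k generalizing d with
  | zero =>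
    obtain ⟨F₀, hBF₀, hF₀A, hF₀⟩ :=
      exists_finrank_eq_of_le (hBA 0) hB₀ (by simpa using hA_finrank 0)
    refine ⟨fun _ => F₀, monotone_const, ?_, ?_, ?_⟩ <;>
      simpa [Fin.forall_fin_one]
  | succ k ih =>
    obtain ⟨F₀, hBF₀, hF₀A, hF₀⟩ :=
      exists_finrank_eq_of_le (hBA 0) hB₀ (by simpa using hA_finrank 0)
    have hB' : ∀ i : Fin k, ∃ w, F₀ ⊔ B i.succ.succ ≤ (F₀ ⊔ B i.castSucc.succ) ⊔ K ∙ w := by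
      intro i
      obtain ⟨w, hw⟩ := hB i.succ
      rw [← Fin.succ_castSucc] at hw
      exact ⟨w, sup_le (le_sup_left.trans le_sup_left) (hw.trans (sup_le_sup_right le_sup_right _))⟩
    have hB'₀ : finrank K (F₀ ⊔ B 1 : Submodule K V) ≤ d + 1 := by
      obtain ⟨v, hv⟩ := hB 0
      have : F₀ ⊔ B 1 ≤ F₀ ⊔ K ∙ v := sup_le le_sup_left (hv.trans (sup_le_sup_right hBF₀ _))
      exact (finrank_mono this).trans (hF₀ ▸ finrank_sup_span_singleton_le F₀ v)
    obtain ⟨F', hF'mono, hBF', hF'A, hF'⟩ := ih (A := A ∘ Fin.succ)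
      (B := fun i => F₀ ⊔ B i.succ) (hA.comp (Fin.strictMono_succ.monotone))
      (fun i => sup_le (hF₀A.trans (hA (Fin.zero_le _))) (hBA _)) hB' hB'₀
      (fun i => by simpa [add_assoc, add_comm 1] using hA_finrank i.succ)
    refine ⟨Matrix.vecCons F₀ F', hF'mono.vecCons (le_sup_left.trans (hBF' 0)), ?_, ?_, ?_⟩
    · exact Fin.cases hBF₀ fun i => le_sup_right.trans (hBF' i)
    · exact Fin.cases hF₀A fun i => hF'A i
    · exact Fin.cases hF₀ fun i => (hF' i).trans (by rw [Fin.val_succ]; omega)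

end Submodule

namespace Module.End

variable {K : Type*} [Field K]

theorem le_comap_of_sub_smul_mem {V : Type*} [AddCommGroup V] [Module K V] {k : ℕ}
    {E : End K V} {lam : Fin k → K} {G : Fin (k + 1) → Submodule K V} (hG : Monotone G)
    (hG₀ : G 0 = ⊥) (hE : ∀ i : Fin k, ∀ x ∈ G i.succ, E x - lam i • x ∈ G i.castSucc)
    (i : Fin (k + 1)) : G i ≤ (G i).comap E := by
  cases i using Fin.cases with
  | zero => simp [hG₀]
  | succ j =>
    intro x hx
    rw [Submodule.mem_comap, ← sub_add_cancel (E x) (lam j • x)]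
    exact add_mem (hG (Fin.castSucc_le_succ j) (hE j x hx)) ((G _).smul_mem _ hx)

variable {V : Type*} [AddCommGroup V] [Module K V] [FiniteDimensional K V]

theorem exists_flag_of_charpoly_eq_prod {k : ℕ} (E : End K V) (lam : Fin k → K)
    (hE : E.charpoly = ∏ i, (X - C (lam i))) :
    ∃ G : Fin (k + 1) → Submodule K V, Monotone G ∧ G 0 = ⊥ ∧
      (∀ i, finrank K (G i) = i) ∧
      ∀ i : Fin k, ∀ x ∈ G i.succ, E x - lam i • x ∈ G i.castSucc := by
  induction k generalizing V with
  | zero =>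
    refine ⟨fun _ => ⊥, monotone_const, rfl, fun i => by simp [Fin.fin_one_eq_zero i], nofun⟩
  | succ k ih =>
    have hroot : E.HasEigenvalue (lam 0) := by
      rw [hasEigenvalue_iff_isRoot_charpoly, hE, IsRoot, eval_prod]
      exact Finset.prod_eq_zero (Finset.mem_univ 0) (by simp)
    obtain ⟨v, hv⟩ := hroot.exists_hasEigenvector
    set p := K ∙ v
    have hEp : ∀ x ∈ p, E x = lam 0 • x := by
      intro x hx
      obtain ⟨c, rfl⟩ := Submodule.mem_span_singleton.mp hx
      rw [map_smul, hv.apply_eq_smul, smul_comm]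
    have hp : ∀ x ∈ p, E x ∈ p := fun x hx => by
      simpa [hEp x hx] using p.smul_mem (lam 0) hx
    have hp_finrank : finrank K p = 1 := finrank_span_singleton hv.2
    have hrestrict : E.restrict hp = lam 0 • LinearMap.id := by
      ext x
      simp [LinearMap.restrict_apply, hEp x x.2]
    have hquot : (p.mapQ p E hp).charpoly = ∏ i : Fin k, (X - C (lam i.succ)) := by
      have h := E.charpoly_eq_charpoly_restrict_mul_charpoly_mapQ_s14 p hp
      rw [hrestrict, LinearMap.charpoly_smul_id, hp_finrank, pow_one, hE,
        Fin.prod_univ_succ] at h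
      exact (mul_left_cancel₀ (X_sub_C_ne_zero _) h).symm
    obtain ⟨G', hmono, hbot, hfinrank, hscalar⟩ := ih _ _ hquot
    refine ⟨Matrix.vecCons ⊥ fun i => (G' i).comap p.mkQ,
      Monotone.vecCons (fun _ _ hij => Submodule.comap_mono (hmono hij)) bot_le, rfl,
      Fin.cases (finrank_bot K V) fun j =>
        (Submodule.finrank_comap_mkQ p (G' j)).trans (by rw [hfinrank, hp_finrank, Fin.val_succ]),
      ?_⟩
    intro i x hx
    cases i using Fin.cases with
    | zero =>
      have hxp : x ∈ p := by simpa [hbot] using (hx : x ∈ (G' 0).comap p.mkQ)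
      simp [hEp x hxp]
    | succ j =>
      simpa [← Fin.succ_castSucc] using hscalar j (p.mkQ x) hx

theorem exists_flag_le_of_charpoly_eq {k δ : ℕ} (E : End K V) (lam : Fin k → K)
    {W : Submodule K V} (hEW : LinearMap.range E ≤ W) (hW : finrank K W ≤ k)
    (hE : E.charpoly = X ^ δ * ∏ i, (X - C (lam i))) :
    ∃ U : Submodule K V, W ≤ U ∧ finrank K U = k ∧
      ∃ G : Fin (k + 1) → Submodule K V, Monotone G ∧ G 0 = ⊥ ∧
        (∀ i, finrank K (G i) = i) ∧ (∀ i, G i ≤ U) ∧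
        ∀ i : Fin k, ∀ x ∈ G i.succ, E x - lam i • x ∈ G i.castSucc := by
  have hV : finrank K V = δ + k := by
    simpa [hE, natDegree_X_pow_mul_prod_X_sub_C] using E.charpoly_natDegree.symm
  obtain ⟨U, hWU, -, hU⟩ := Submodule.exists_finrank_eq_of_le le_top hW
    (by rw [finrank_top]; omega)
  have hEU : ∀ x, E x ∈ U := fun x => hWU (hEW (LinearMap.mem_range_self E x))
  have hquot : finrank K (V ⧸ U) = δ := by
    have := U.finrank_quotient_add_finrank
    omega
  have hrestrict : (E.restrict fun x _ => hEU x).charpoly = ∏ i, (X - C (lam i)) := by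
    have h := E.charpoly_eq_charpoly_restrict_mul_X_pow hEU
    rw [hE, hquot, mul_comm] at h
    exact (mul_right_cancel₀ (pow_ne_zero δ X_ne_zero) h).symm
  obtain ⟨G, hG, hG₀, hG_finrank, hG_scalar⟩ := exists_flag_of_charpoly_eq_prod _ lam hrestrict
  refine ⟨U, hWU, hU, fun i => (G i).map U.subtype, fun i j hij => Submodule.map_mono (hG hij),
    by simp [hG₀], fun i => by simp [Submodule.finrank_map_subtype_eq, hG_finrank],
    fun i => Submodule.map_subtype_le U _, ?_⟩
  rintro i _ ⟨x, hx, rfl⟩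
  exact ⟨_, hG_scalar i x hx, by simp [LinearMap.restrict_apply]⟩

end Module.End

namespace LinearMap

variable {K V₀ V₁ : Type*} [Field K] [AddCommGroup V₀] [Module K V₀] [FiniteDimensional K V₀]
  [AddCommGroup V₁] [Module K V₁] [FiniteDimensional K V₁]

theorem exists_flag_between_map_comap {k d : ℕ} (f : V₀ →ₗ[K] V₁) (g : V₁ →ₗ[K] V₀)
    {G : Fin (k + 1) → Submodule K V₁} (hG : Monotone G) (hG_finrank : ∀ i, finrank K (G i) = i)
    (hG_inv : ∀ i, G i ≤ (G i).comap (f ∘ₗ g)) {U : Submodule K V₁} (hfU : range f ≤ U)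
    (hGU : ∀ i, G i ≤ U) (hdim : d + finrank K U ≤ finrank K V₀) :
    ∃ F : Fin (k + 1) → Submodule K V₀, Monotone F ∧ (∀ i, finrank K (F i) = d + i) ∧
      (∀ i, (G i).map g ≤ F i) ∧ ∀ i, F i ≤ (G i).comap f := by
  have hcover : ∀ i : Fin k, ∃ v, (G i.succ).map g ≤ (G i.castSucc).map g ⊔ K ∙ v := by
    intro i
    obtain ⟨w, hw⟩ := Submodule.exists_le_sup_span_singleton (hG (Fin.castSucc_le_succ i))
      (by simp [hG_finrank])
    refine ⟨g w, (Submodule.map_mono hw).trans ?_⟩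
    rw [Submodule.map_sup, Submodule.map_span, Set.image_singleton]
  have hgf : ∀ i, (G i).map g ≤ (G i).comap f := by
    intro i
    rw [← Submodule.map_le_iff_le_comap, ← Submodule.map_comp]
    exact Submodule.map_le_iff_le_comap.mpr (hG_inv i)
  have hcomap : ∀ i, d + i ≤ finrank K ((G i).comap f) := by
    intro i
    have h := Submodule.finrank_comap_add_finrank_sup_range f (G i)
    have := Submodule.finrank_mono (sup_le (hGU i) hfU)
    rw [hG_finrank] at h
    omega
  obtain ⟨F, hF, hgF, hFf, hF_finrank⟩ := Submodule.exists_monotone_finrank_eq_between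
    (fun i j hij => Submodule.comap_mono (hG hij))
    hgf hcover ((Submodule.finrank_map_le g (G 0)).trans (by simp [hG_finrank])) hcomap
  exact ⟨F, hF, hF_finrank, hgF, hFf⟩

end LinearMap

/-- Let `V₀ = ℂ^n`, `V₁ = ℂ^m`, `r ≥ s ≥ 0`, `δ = max(m-n+r-s, 0)`. Let `f : V₀ → V₁`
have rank at most `m - δ`, let `g : V₁ → V₀`, and let `λ₁, …, λ_{m-δ}` be the roots,
with multiplicity and in any chosen order, of `χ̄(u) = u^{-δ} det(u - fg)`. Then there
exist chains of subspaces `F_{r-s} ⊆ F_{r-s+1} ⊆ ⋯ ⊆ F_{r-s+(m-δ)} ⊆ V₀` and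
`0 = G₀ ⊆ G₁ ⊆ ⋯ ⊆ G_{m-δ} ⊆ V₁` with `dim F_{r-s+i} = r-s+i`, `dim G_i = i`,
`f(F_{r-s+i}) ⊆ G_i`, `g(G_i) ⊆ F_{r-s+i}`, and `fg` acting on `G_i/G_{i-1}` by the
scalar `λ_i`. -/
theorem stmt14 (n m r s : ℕ) (hrs : s ≤ r)
    (f : (Fin n → ℂ) →ₗ[ℂ] (Fin m → ℂ)) (g : (Fin m → ℂ) →ₗ[ℂ] (Fin n → ℂ))
    (hrank : Module.finrank ℂ (LinearMap.range f) ≤ m - (m + r - (n + s)))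
    (lam : Fin (m - (m + r - (n + s))) → ℂ)
    (hchi : (f ∘ₗ g).charpoly =
      Polynomial.X ^ (m + r - (n + s)) *
        ∏ i : Fin (m - (m + r - (n + s))), (Polynomial.X - Polynomial.C (lam i))) :
    ∃ (F : Fin (m - (m + r - (n + s)) + 1) → Submodule ℂ (Fin n → ℂ))
      (G : Fin (m - (m + r - (n + s)) + 1) → Submodule ℂ (Fin m → ℂ)),
      Monotone F ∧ Monotone G ∧ G 0 = ⊥ ∧
      (∀ i, Module.finrank ℂ (F i) = (r - s) + (i : ℕ)) ∧
      (∀ i, Module.finrank ℂ (G i) = (i : ℕ)) ∧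
      (∀ i, Submodule.map f (F i) ≤ G i) ∧
      (∀ i, Submodule.map g (G i) ≤ F i) ∧
      (∀ i : Fin (m - (m + r - (n + s))),
        ∀ x ∈ G i.succ, f (g x) - lam i • x ∈ G i.castSucc) := by
  have hm : m = (m + r - (n + s)) + (m - (m + r - (n + s))) := by
    simpa [hchi, natDegree_X_pow_mul_prod_X_sub_C] using (f ∘ₗ g).charpoly_natDegree.symm
  obtain ⟨U, hfU, hU, G, hG, hG₀, hG_finrank, hGU, hG_scalar⟩ :=
    Module.End.exists_flag_le_of_charpoly_eq (f ∘ₗ g) lam (LinearMap.range_comp_le_range g f)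
      hrank hchi
  obtain ⟨F, hF, hF_finrank, hgF, hFf⟩ := f.exists_flag_between_map_comap g (d := r - s) hG
    hG_finrank (Module.End.le_comap_of_sub_smul_mem hG hG₀ hG_scalar) hfU hGU
    (by rw [hU, finrank_fin_fun]; omega)
  exact ⟨F, G, hF, hG, hG₀, hF_finrank, hG_finrank,
    fun i => Submodule.map_le_iff_le_comap.mpr (hFf i), hgF, hG_scalar⟩
end

section
/- Let $V_0 = \mathbb{C}^n$, $V_1 = \mathbb{C}^m$, $r \ge s \ge 0$, $\delta = \max(m-n+r-s,0)$, and let $(f,g)$ be a point of $Z$, i.e., $f\colon V_0 \to V_1$ with $\mathrm{rank}(f) \le m-\delta$ and $g\colon V_1 \to V_0$ arbitrary. Then there exist bases of $V_0$ and $V_1$ in which the matrices of $f$ and $g$ have block forms $\begin{pmatrix} 0 & * \\ 0 & A \end{pmatrix}$ and $\begin{pmatrix} * & * \\ 0 & B \end{pmatrix}$ respectively, where $A$ and $B$ are upper-triangular square matrices of size $m - \delta$. -/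
/-!
Since `rank f ≤ c = m - δ`, one finds `U ⊆ ker f` of dimension `w = n - c` and `W ⊆ V₁` of
dimension `δ` with `g W ⊆ U`: take `W ⊆ ker (f ∘ g)`, which has dimension at least `m - c`,
containing as much of `ker g` as possible, so that `dim g W ≤ w`. Then `(U, W)` is a
subrepresentation of `(f, g)` and the induced maps `f̄ : V₀/U → V₁/W`, `ḡ : V₁/W → V₀/U` act
between spaces of the same dimension `c`. Over an algebraically closed field such a pair is
simultaneously triangularizable: an eigenvector of `ḡ ∘ f̄` or of `f̄ ∘ ḡ` yields a pair of
lines `(L₀, L₁)` with `f̄ L₀ ⊆ L₁` and `ḡ L₁ ⊆ L₀`, and one inducts on the quotients. Bases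
of `U` and `W` followed by lifts of the triangularizing bases give the block form.
-/

open Module Submodule

section

variable {R M M' ι : Type*} [Ring R] [AddCommGroup M] [Module R M] [AddCommGroup M'] [Module R M']

theorem LinearMap.mem_span_image_union (π : M →ₗ[R] M') {v : ι → M} {Z S : Set ι}
    (hker : ker π ≤ span R (v '' Z)) {x : M} (hx : π x ∈ span R ((π ∘ v) '' S)) :
    x ∈ span R (v '' (Z ∪ S)) := by
  rw [Set.image_comp, ← map_span] at hx
  obtain ⟨y, hy, hxy⟩ := hx
  rw [Set.image_union, span_union, ← sub_add_cancel x y]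
  exact add_mem_sup (hker (by simp [hxy])) hy

theorem Module.Basis.repr_eq_zero_of_mem_span_image (b : Basis ι R M) {s : Set ι} {x : M}
    (hx : x ∈ span R (b '' s)) {i : ι} (hi : i ∉ s) : b.repr x i = 0 :=
  Finsupp.notMem_support_iff.mp fun h => hi (b.mem_span_image.mp hx h)

end

variable {K V V' : Type*} [Field K] [AddCommGroup V] [Module K V] [AddCommGroup V'] [Module K V']

theorem Submodule.exists_finrank_eq_between [FiniteDimensional K V] {A B : Submodule K V}
    (hAB : A ≤ B) {k : ℕ} (hA : finrank K A ≤ k) (hB : k ≤ finrank K B) :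
    ∃ C : Submodule K V, A ≤ C ∧ C ≤ B ∧ finrank K C = k := by
  induction k with
  | zero => exact ⟨A, le_rfl, hAB, by omega⟩
  | succ k ih =>
    rcases eq_or_ne (finrank K A) (k + 1) with hAk | hAk
    · exact ⟨A, le_rfl, hAB, hAk⟩
    obtain ⟨C, hAC, hCB, hC⟩ := ih (by omega) (by omega)
    obtain ⟨x, hxB, hxC⟩ := SetLike.exists_of_lt (lt_of_le_of_ne hCB (by rintro rfl; omega))
    exact ⟨C ⊔ span K {x}, hAC.trans le_sup_left,
      sup_le hCB ((span_singleton_le_iff_mem x B).mpr hxB),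
      by rw [finrank_sup_span_singleton hxC, hC]⟩

theorem LinearMap.finrank_map_add_finrank_le [FiniteDimensional K V] (f : V →ₗ[K] V')
    {W₀ W : Submodule K V} (hW₀W : W₀ ≤ W) (hW₀ : W₀ ≤ ker f) :
    finrank K (W.map f) + finrank K W₀ ≤ finrank K W := by
  have hker : W₀.comap W.subtype ≤ ker (f.domRestrict W) := fun x hx => hW₀ hx
  calc finrank K (W.map f) + finrank K W₀
      = finrank K (range (f.domRestrict W)) + finrank K (W₀.comap W.subtype) := by
        rw [LinearMap.range_domRestrict, (comapSubtypeEquivOfLe hW₀W).finrank_eq]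
    _ ≤ finrank K (range (f.domRestrict W)) + finrank K (ker (f.domRestrict W)) := by
        gcongr
        exact finrank_mono hker
    _ = finrank K W := LinearMap.finrank_range_add_finrank_ker _

theorem LinearMap.exists_le_ker_and_le_comap [FiniteDimensional K V] [FiniteDimensional K V']
    (F : V →ₗ[K] V') (G : V' →ₗ[K] V) {w δ c : ℕ} (hF : finrank K (range F) ≤ c)
    (hV : w + c = finrank K V) (hV' : δ + c = finrank K V') :
    ∃ (U : Submodule K V) (W : Submodule K V'), finrank K U = w ∧ finrank K W = δ ∧
      U ≤ ker F ∧ W ≤ U.comap G := by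
  have hE : δ ≤ finrank K ((ker F).comap G) := by
    have hrk := LinearMap.finrank_range_add_finrank_ker (F ∘ₗ G)
    have := finrank_mono (LinearMap.range_comp_le_range G F)
    rw [LinearMap.ker_comp] at hrk
    omega
  obtain ⟨W₁, -, hW₁, hW₁rk⟩ := exists_finrank_eq_between (bot_le : ⊥ ≤ ker G)
    (k := min δ (finrank K (ker G))) (by simp) (min_le_right _ _)
  obtain ⟨W, hW₁W, hWE, hWrk⟩ := exists_finrank_eq_between (hW₁.trans (comap_mono bot_le))
    (k := δ) (hW₁rk.trans_le (min_le_left _ _)) hE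
  have hGW : finrank K (W.map G) ≤ w := by
    have := G.finrank_map_add_finrank_le hW₁W hW₁
    have := LinearMap.finrank_range_add_finrank_ker G
    have := (range G).finrank_le
    omega
  have hkerF : w ≤ finrank K (ker F) := by
    have := LinearMap.finrank_range_add_finrank_ker F
    omega
  obtain ⟨U, hWU, hUF, hUrk⟩ := exists_finrank_eq_between (map_le_iff_le_comap.mpr hWE) hGW hkerF
  exact ⟨U, W, hUrk, hWrk, hUF, map_le_iff_le_comap.mp hWU⟩

theorem LinearMap.exists_ne_zero_pair_mem_span_singleton [IsAlgClosed K] [FiniteDimensional K V]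
    [FiniteDimensional K V'] [Nontrivial V] [Nontrivial V'] (F : V →ₗ[K] V') (G : V' →ₗ[K] V) :
    ∃ (x : V) (y : V'), x ≠ 0 ∧ y ≠ 0 ∧ F x ∈ K ∙ y ∧ G y ∈ K ∙ x := by
  obtain ⟨μ, hμ⟩ := Module.End.exists_eigenvalue (G ∘ₗ F)
  obtain ⟨x, hx⟩ := hμ.exists_hasEigenvector
  by_cases hFx : F x = 0
  · obtain ⟨ν, hν⟩ := Module.End.exists_eigenvalue (F ∘ₗ G)
    obtain ⟨y, hy⟩ := hν.exists_hasEigenvector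
    by_cases hGy : G y = 0
    · exact ⟨x, y, hx.2, hy.2, by simp [hFx], by simp [hGy]⟩
    · refine ⟨G y, y, hGy, hy.2, ?_, mem_span_singleton_self _⟩
      rw [← LinearMap.comp_apply, hy.apply_eq_smul]
      exact smul_mem _ _ (mem_span_singleton_self y)
  · refine ⟨x, F x, hx.2, hFx, mem_span_singleton_self _, ?_⟩
    rw [← LinearMap.comp_apply, hx.apply_eq_smul]
    exact smul_mem _ _ (mem_span_singleton_self x)

theorem LinearMap.exists_finrank_eq_one_le_comap [IsAlgClosed K] [FiniteDimensional K V]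
    [FiniteDimensional K V'] [Nontrivial V] [Nontrivial V'] (F : V →ₗ[K] V') (G : V' →ₗ[K] V) :
    ∃ (U : Submodule K V) (W : Submodule K V'), finrank K U = 1 ∧ finrank K W = 1 ∧
      U ≤ W.comap F ∧ W ≤ U.comap G := by
  obtain ⟨x, y, hx, hy, hFx, hGy⟩ := F.exists_ne_zero_pair_mem_span_singleton G
  exact ⟨K ∙ x, K ∙ y, finrank_span_singleton hx, finrank_span_singleton hy,
    (span_singleton_le_iff_mem _ _).mpr hFx, (span_singleton_le_iff_mem _ _).mpr hGy⟩

structure IsQuotientLift (U : Submodule K V) (w : ℕ) {c n : ℕ} (u : Fin c → V ⧸ U)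
    (b : Fin n → V) : Prop where
  add_eq : w + c = n
  span_eq : span K (b '' {j | (j : ℕ) < w}) = U
  mkQ_eq : ∀ (j : Fin n) (k : Fin c), (j : ℕ) = w + k → U.mkQ (b j) = u k

theorem exists_basis_isQuotientLift [FiniteDimensional K V] (U : Submodule K V) {w c n : ℕ}
    (hU : finrank K U = w) (hn : w + c = n) (u : Basis (Fin c) K (V ⧸ U)) :
    ∃ b : Basis (Fin n) K V, IsQuotientLift U w u b := by
  obtain ⟨U', hU'⟩ := U.exists_isCompl
  let e : Fin w ⊕ Fin c ≃ Fin n := finSumFinEquiv.trans (finCongr hn)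
  let bU := finBasisOfFinrankEq K U hU
  let b := ((bU.prod (u.map (quotientEquivOfIsCompl U U' hU'))).map
    (prodEquivOfIsCompl U U' hU')).reindex e
  have hb_inl (a : Fin w) : b (e (.inl a)) = bU a := by simp [b]
  have hb_inr (k : Fin c) : b (e (.inr k)) = quotientEquivOfIsCompl U U' hU' (u k) := by simp [b]
  refine ⟨b, hn, ?_, fun j k hjk => ?_⟩
  · have himage : b '' {j | (j : ℕ) < w} = Set.range (U.subtype ∘ bU) := by
      ext x
      constructor
      · rintro ⟨j, hj, rfl⟩
        have hj' : j = e (.inl ⟨j, hj⟩) := Fin.ext (by simp [e])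
        exact ⟨⟨j, hj⟩, ((congrArg b hj').trans (hb_inl _)).symm⟩
      · rintro ⟨a, rfl⟩
        exact ⟨e (.inl a), by simp [e], hb_inl a⟩
    rw [himage, Set.range_comp, ← map_span, bU.span_eq, map_subtype_top]
  · have hj : j = e (.inr k) := Fin.ext (by simp [e, hjk])
    rw [hj, hb_inr, mkQ_apply, mk_quotientEquivOfIsCompl_apply]

namespace IsQuotientLift

variable {U : Submodule K V} {w c n : ℕ} {u : Fin c → V ⧸ U} {b₀ : Fin n → V}

theorem mem_of_lt (hb₀ : IsQuotientLift U w u b₀) {j : Fin n} (hj : (j : ℕ) < w) : b₀ j ∈ U :=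
  hb₀.span_eq ▸ subset_span ⟨j, hj, rfl⟩

/-- The bound `δ + (j + 1 - w)` uses truncated subtraction: it is `δ` for `j < w`. -/
theorem apply_mem_span {f : V →ₗ[K] V'} {W : Submodule K V'} (hfU : U ≤ W.comap f) {δ m : ℕ}
    {v : Fin c → V' ⧸ W} (hu : ∀ k, U.mapQ W f hfU (u k) ∈ span K (v '' Set.Iic k))
    {b₁ : Fin m → V'} (hb₀ : IsQuotientLift U w u b₀) (hb₁ : IsQuotientLift W δ v b₁)
    (j : Fin n) : f (b₀ j) ∈ span K (b₁ '' {i | (i : ℕ) < δ + ((j : ℕ) + 1 - w)}) := by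
  by_cases hj : (j : ℕ) < w
  · refine span_mono (Set.image_mono fun i hi => ?_) (hb₁.span_eq ▸ hfU (hb₀.mem_of_lt hj))
    simp only [Set.mem_ofPred_eq] at hi ⊢
    omega
  have hk : (j : ℕ) - w < c := by have := hb₀.add_eq; omega
  have hmkQ : W.mkQ (f (b₀ j)) ∈
      span K ((W.mkQ ∘ b₁) '' {i | δ ≤ (i : ℕ) ∧ (i : ℕ) - δ ≤ j - w}) := by
    rw [mkQ_apply, ← mapQ_apply U W f (h := hfU), ← mkQ_apply,
      hb₀.mkQ_eq j ⟨_, hk⟩ (by simp only; omega)]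
    refine span_mono ?_ (hu _)
    rintro _ ⟨i, hi, rfl⟩
    refine ⟨⟨δ + i, by have := hb₁.add_eq; omega⟩, ?_, hb₁.mkQ_eq _ _ rfl⟩
    simp only [Set.mem_Iic, Fin.le_def] at hi
    simp only [Set.mem_ofPred_eq]
    omega
  refine span_mono (Set.image_mono ?_)
    (W.mkQ.mem_span_image_union (by rw [ker_mkQ, hb₁.span_eq]) hmkQ)
  rintro i (hi | hi) <;> simp only [Set.mem_ofPred_eq] at hi ⊢ <;> omega

end IsQuotientLift

theorem exists_basis_pair_triangular [IsAlgClosed K] [FiniteDimensional K V]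
    [FiniteDimensional K V'] {c : ℕ} (hV : finrank K V = c) (hV' : finrank K V' = c)
    (f : V →ₗ[K] V') (g : V' →ₗ[K] V) :
    ∃ (u : Basis (Fin c) K V) (v : Basis (Fin c) K V'),
      (∀ j, f (u j) ∈ span K (v '' Set.Iic j)) ∧ (∀ j, g (v j) ∈ span K (u '' Set.Iic j)) := by
  induction c generalizing V V' with
  | zero =>
    exact ⟨finBasisOfFinrankEq K V hV, finBasisOfFinrankEq K V' hV', finZeroElim, finZeroElim⟩
  | succ c ih =>
    have : Nontrivial V := nontrivial_of_finrank_eq_succ hV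
    have : Nontrivial V' := nontrivial_of_finrank_eq_succ hV'
    obtain ⟨U, W, hU, hW, hfU, hgW⟩ := f.exists_finrank_eq_one_le_comap g
    have hVU := U.finrank_quotient_add_finrank
    have hV'W := W.finrank_quotient_add_finrank
    obtain ⟨u, v, hu, hv⟩ := ih (by omega) (by omega) (U.mapQ W f hfU) (W.mapQ U g hgW)
    obtain ⟨b₀, hb₀⟩ := exists_basis_isQuotientLift U hU (Nat.add_comm 1 c) u
    obtain ⟨b₁, hb₁⟩ := exists_basis_isQuotientLift W hW (Nat.add_comm 1 c) v
    have hIic (j : Fin (c + 1)) :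
        {i : Fin (c + 1) | (i : ℕ) < 1 + ((j : ℕ) + 1 - 1)} = Set.Iic j := by
      ext i
      simp only [Set.mem_ofPred_eq, Set.mem_Iic, Fin.le_def]
      omega
    refine ⟨b₀, b₁, fun j => ?_, fun j => ?_⟩
    · simpa only [hIic] using hb₀.apply_mem_span hfU hu hb₁ j
    · simpa only [hIic] using hb₁.apply_mem_span hgW hv hb₀ j

theorem exists_basis_pair_blockTriangular [IsAlgClosed K] [FiniteDimensional K V]
    [FiniteDimensional K V'] (F : V →ₗ[K] V') (G : V' →ₗ[K] V) {w δ c n m : ℕ}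
    (hF : finrank K (LinearMap.range F) ≤ c) (hn : w + c = n) (hm : δ + c = m)
    (hV : finrank K V = n) (hV' : finrank K V' = m) :
    ∃ (b₀ : Basis (Fin n) K V) (b₁ : Basis (Fin m) K V'),
      (∀ j : Fin n, (j : ℕ) < w → F (b₀ j) = 0) ∧
      (∀ j : Fin n, F (b₀ j) ∈ span K (b₁ '' {i | (i : ℕ) < δ + ((j : ℕ) + 1 - w)})) ∧
      (∀ j : Fin m, G (b₁ j) ∈ span K (b₀ '' {i | (i : ℕ) < w + ((j : ℕ) + 1 - δ)})) := by
  obtain ⟨U, W, hU, hW, hUF, hWG⟩ := F.exists_le_ker_and_le_comap G hF (hV ▸ hn) (hV' ▸ hm)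
  have hUW : U ≤ W.comap F := hUF.trans (LinearMap.ker_le_comap F)
  have hVU := U.finrank_quotient_add_finrank
  have hV'W := W.finrank_quotient_add_finrank
  obtain ⟨u, v, hu, hv⟩ := exists_basis_pair_triangular (c := c) (by omega) (by omega)
    (U.mapQ W F hUW) (W.mapQ U G hWG)
  obtain ⟨b₀, hb₀⟩ := exists_basis_isQuotientLift U hU hn u
  obtain ⟨b₁, hb₁⟩ := exists_basis_isQuotientLift W hW hm v
  exact ⟨b₀, b₁, fun j hj => hUF (hb₀.mem_of_lt hj), hb₀.apply_mem_span hUW hu hb₁,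
    hb₁.apply_mem_span hWG hv hb₀⟩

section Matrix

variable {ι κ : Type*} [Fintype ι] [DecidableEq ι] [Fintype κ] [DecidableEq κ]

noncomputable def Module.Basis.toMatrixGL (b : Basis ι K (ι → K)) : GL ι K :=
  ⟨b.toMatrix (Pi.basisFun K ι), (Pi.basisFun K ι).toMatrix b, b.toMatrix_mul_toMatrix_flip _,
    Basis.toMatrix_mul_toMatrix_flip _ _⟩

theorem Module.Basis.toMatrixGL_mul_mul_inv_apply (b : Basis ι K (ι → K))
    (b' : Basis κ K (κ → K)) (A : Matrix κ ι K) (i : κ) (j : ι) :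
    ((b'.toMatrixGL : Matrix κ κ K) * A * ((b.toMatrixGL⁻¹ : GL ι K) : Matrix ι ι K)) i j =
      b'.repr (A.mulVecLin (b j)) i := by
  have h : b'.toMatrix (Pi.basisFun K κ) * A * (Pi.basisFun K ι).toMatrix b =
      LinearMap.toMatrix b b' A.mulVecLin := by
    rw [← basis_toMatrix_mul_linearMap_toMatrix_mul_basis_toMatrix (b' := Pi.basisFun K ι)
      (c' := Pi.basisFun K κ), ← Matrix.toLin'_apply', ← Matrix.toLin_eq_toLin',
      LinearMap.toMatrix_toLin]
  exact (congrFun₂ h i j).trans (LinearMap.toMatrix_apply _ _ _ _ _)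

end Matrix

/-- Let `V₀ = ℂ^n`, `V₁ = ℂ^m`, `r ≥ s ≥ 0`, `δ = max(m-n+r-s,0)`, and let `(f,g)` be a
point of `Z`, i.e. `f : V₀ → V₁` of rank at most `m - δ` and `g : V₁ → V₀` arbitrary.
Then there exist bases of `V₀` and `V₁` (i.e. invertible matrices `P`, `Q`) in which the
matrices of `f` and `g` take the block forms `[[0, *], [0, A]]` and `[[*, *], [0, B]]`
respectively, with `A`, `B` upper-triangular square blocks of size `m - δ` (the column
split of `f`, resp. row split of `g`, being `n = w + (m - δ)` with `w = n - (m - δ)`, and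
the row split of `f`, resp. column split of `g`, being `m = δ + (m - δ)`). -/
theorem stmt15 (n m r s δ c w : ℕ) (hrs : s ≤ r)
    (hδ : δ = m + r - (n + s)) (hc : c = m - δ) (hw : w = n - c)
    (f : Matrix (Fin m) (Fin n) ℂ) (g : Matrix (Fin n) (Fin m) ℂ)
    (hf : f.rank ≤ m - δ) :
    ∃ (P : GL (Fin n) ℂ) (Q : GL (Fin m) ℂ),
      (∀ (i : Fin m) (j : Fin n), (j : ℕ) < w →
        ((Q : Matrix (Fin m) (Fin m) ℂ) * f * ((P⁻¹ : GL (Fin n) ℂ) : Matrix (Fin n) (Fin n) ℂ)) i j = 0) ∧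
      (∀ (i : Fin m) (j : Fin n), δ ≤ (i : ℕ) → w ≤ (j : ℕ) → (j : ℕ) - w < (i : ℕ) - δ →
        ((Q : Matrix (Fin m) (Fin m) ℂ) * f * ((P⁻¹ : GL (Fin n) ℂ) : Matrix (Fin n) (Fin n) ℂ)) i j = 0) ∧
      (∀ (i : Fin n) (j : Fin m), w ≤ (i : ℕ) → (j : ℕ) < δ →
        ((P : Matrix (Fin n) (Fin n) ℂ) * g * ((Q⁻¹ : GL (Fin m) ℂ) : Matrix (Fin m) (Fin m) ℂ)) i j = 0) ∧
      (∀ (i : Fin n) (j : Fin m), w ≤ (i : ℕ) → δ ≤ (j : ℕ) → (j : ℕ) - δ < (i : ℕ) - w →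
        ((P : Matrix (Fin n) (Fin n) ℂ) * g * ((Q⁻¹ : GL (Fin m) ℂ) : Matrix (Fin m) (Fin m) ℂ)) i j = 0) := by
  have hF : finrank ℂ (LinearMap.range f.mulVecLin) ≤ c := hc ▸ hf
  obtain ⟨b₀, b₁, hF0, hFb, hGb⟩ := exists_basis_pair_blockTriangular f.mulVecLin g.mulVecLin hF
    (w := w) (δ := m - c) (by omega) (by omega) (finrank_fin_fun ℂ) (finrank_fin_fun ℂ)
  refine ⟨b₀.toMatrixGL, b₁.toMatrixGL, ?_, ?_, ?_, ?_⟩ <;> intro i j <;>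
    simp only [Module.Basis.toMatrixGL_mul_mul_inv_apply]
  · intro hj
    rw [hF0 j hj, map_zero, Finsupp.zero_apply]
  · intro hi hj hji
    exact b₁.repr_eq_zero_of_mem_span_image (hFb j) (by simp only [Set.mem_ofPred_eq]; omega)
  · intro hi hj
    exact b₀.repr_eq_zero_of_mem_span_image (hGb j) (by simp only [Set.mem_ofPred_eq]; omega)
  · intro hi hj hji
    exact b₀.repr_eq_zero_of_mem_span_image (hGb j) (by simp only [Set.mem_ofPred_eq]; omega)
end
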